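/- arXiv:math/0609319 — 6 statements merged into one kernel-verified Lean document; each statement's English description precedes it below -/
import Mathlib

section
/- Let E ⊂ 𝕍 = V ⊕ V* be a Lagrangian subspace and let S = pr_V(E) be its range. Then the formula ω_S(v₁,v₂) = α₁(v₂), where v_i ⊕ α_i ∈ E are arbitrary lifts of v_i ∈ S, gives a well-defined alternating bilinear form on S; moreover its kernel is {v ∈ V : v ⊕ 0 ∈ E}, and E = {v ⊕ α : v ∈ S, α|_S = ω_S(v,·)}. -/
/-- The canonical split pairing on `𝕍 = V ⊕ V*`. -/
def vPair {V : Type*} [AddCommGroup V] [Module ℝ V]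
    (p q : V × Module.Dual ℝ V) : ℝ :=
  p.2 q.1 + q.2 p.1

/-- The orthogonal complement of a set in `𝕍 = V ⊕ V*` for the canonical pairing. -/
def vPerp {V : Type*} [AddCommGroup V] [Module ℝ V]
    (S : Set (V × Module.Dual ℝ V)) : Set (V × Module.Dual ℝ V) :=
  {w | ∀ e ∈ S, vPair w e = 0}

/-- For a Lagrangian subspace `E ⊂ V ⊕ V*` with range `S = pr_V(E)`, the
formula `ω_S(v₁,v₂) = α₁(v₂)` (for lifts `vᵢ ⊕ αᵢ ∈ E`) is well defined, alternating and
skew-symmetric (`ω_S(v₁,v₂) = −α₂(v₁)`); its kernel is `{v : v ⊕ 0 ∈ E}`; and `E` is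
recovered as `{v ⊕ α : v ∈ S, α|_S = ω_S(v,·)}`. -/
theorem stmt9 {V : Type*} [AddCommGroup V] [Module ℝ V] [FiniteDimensional ℝ V]
    (E : Submodule ℝ (V × Module.Dual ℝ V))
    (hE : (E : Set (V × Module.Dual ℝ V)) = vPerp (E : Set _)) :
    -- well-definedness: `α₁(v₂)` is independent of the lift `α₁` of `v₁`
    (∀ (v₁ : V) (α₁ α₁' : Module.Dual ℝ V) (v₂ : V) (α₂ : Module.Dual ℝ V),
        (v₁, α₁) ∈ E → (v₁, α₁') ∈ E → (v₂, α₂) ∈ E → α₁ v₂ = α₁' v₂) ∧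
    -- `ω_S` is alternating
    (∀ (v : V) (α : Module.Dual ℝ V), (v, α) ∈ E → α v = 0) ∧
    -- `ω_S(v₁,v₂) = α₁(v₂) = −α₂(v₁)`
    (∀ (v₁ : V) (α₁ : Module.Dual ℝ V) (v₂ : V) (α₂ : Module.Dual ℝ V),
        (v₁, α₁) ∈ E → (v₂, α₂) ∈ E → α₁ v₂ = -(α₂ v₁)) ∧
    -- the kernel of `ω_S` is `{v ∈ V : v ⊕ 0 ∈ E}`
    (∀ (v : V) (α : Module.Dual ℝ V), (v, α) ∈ E →
        ((∀ (v₂ : V) (α₂ : Module.Dual ℝ V), (v₂, α₂) ∈ E → α v₂ = 0) ↔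
          (v, (0 : Module.Dual ℝ V)) ∈ E)) ∧
    -- reconstruction: `E = {v ⊕ α : v ∈ S, α|_S = ω_S(v,·)}`
    (∀ (v : V) (α : Module.Dual ℝ V),
        (v, α) ∈ E ↔
          ((∃ α₀ : Module.Dual ℝ V, (v, α₀) ∈ E) ∧
            ∀ (v₂ : V) (α₂ : Module.Dual ℝ V), (v₂, α₂) ∈ E → α v₂ = -(α₂ v))) := by
  have skew : ∀ (v₁ : V) (α₁ : Module.Dual ℝ V) (v₂ : V) (α₂ : Module.Dual ℝ V),
      (v₁, α₁) ∈ E → (v₂, α₂) ∈ E → α₁ v₂ = -(α₂ v₁) := by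
    intro v₁ α₁ v₂ α₂ h₁ h₂
    have h₁' : (v₁, α₁) ∈ vPerp (E : Set _) := hE ▸ h₁
    have := h₁' _ h₂
    simp only [vPair] at this
    linarith
  refine ⟨?_, ?_, skew, ?_, ?_⟩
  · intro v₁ α₁ α₁' v₂ α₂ h₁ h₁' h₂
    rw [skew v₁ α₁ v₂ α₂ h₁ h₂, skew v₁ α₁' v₂ α₂ h₁' h₂]
  · intro v α h
    have := skew v α v α h h
    linarith
  · intro v α h
    constructor
    · intro hk
      have : (v, (0 : Module.Dual ℝ V)) ∈ vPerp (E : Set _) := by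
        intro e he
        simp only [vPair, LinearMap.zero_apply, zero_add]
        have := skew v α e.1 e.2 h he
        have hk' := hk e.1 e.2 he
        linarith
      exact Set.ext_iff.mp hE.symm _ |>.mp this
    · intro h0 v₂ α₂ h₂
      have h1 := skew v α v₂ α₂ h h₂
      have h2 := skew v₂ α₂ v (0 : Module.Dual ℝ V) h₂ h0
      simp at h2
      rw [h1, h2, neg_zero]
  · intro v α
    constructor
    · intro h
      exact ⟨⟨α, h⟩, fun v₂ α₂ h₂ => skew v α v₂ α₂ h h₂⟩
    · rintro ⟨⟨α₀, h₀⟩, hω⟩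
      have : (v, α) ∈ vPerp (E : Set _) := by
        intro e he
        simp only [vPair]
        have := hω e.1 e.2 he
        linarith
      exact Set.ext_iff.mp hE.symm _ |>.mp this
end

section
/- Let W be a split real quadratic space of signature (n,n), E and F transverse Lagrangian subspaces of W, with bases e₁,…,eₙ of E and f¹,…,fⁿ of F satisfying B(e_i, f^j) = δ_i^j. Then the element p = ∏_{i=1}^n e_i f^i of the Clifford algebra satisfies: p² = p, E·p = 0 (i.e. e·p = 0 for all e ∈ E), p·F = 0, and p − 1 ∈ Cl(W)·E. -/
/-!
Write `x_i = e_i f^i`. From `e_i² = 0` and `e_i f^i + f^i e_i = 1` each `x_i` is idempotent, and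
for `j ≠ i` both `e_j` and `f^j` anticommute with `e_i` and with `f^i`, hence commute with `x_i`.
So `p = ∏ x_i` is a product of commuting idempotents; `e_j` passes through every factor of `p`
until it meets `x_j = e_j f^j` and dies, and symmetrically for `f^j` on the right. Finally
`x_i - 1 = -f^i e_i` lies in the left ideal `Cl(W)·E`, and elements congruent to `1` modulo a left
ideal are closed under products.
-/

section

variable {M : Type*}

theorem IsIdempotentElem.list_prod [Monoid M] :
    ∀ {l : List M}, (∀ x ∈ l, ∀ y ∈ l, Commute x y) → (∀ x ∈ l, IsIdempotentElem x) →
      IsIdempotentElem l.prod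
  | [], _, _ => .one
  | x :: t, hcomm, hidem => by
    rw [List.prod_cons]
    refine .mul_of_commute ?_ (hidem x (by simp)) ?_
    · exact Commute.list_prod_right _ _ fun y hy => hcomm x (by simp) y (by simp [hy])
    · exact IsIdempotentElem.list_prod (fun u hu v hv => hcomm u (by simp [hu]) v (by simp [hv]))
        fun u hu => hidem u (by simp [hu])

theorem mul_list_prod_eq_zero [MonoidWithZero M] {a : M} :
    ∀ {l : List M}, (∀ y ∈ l, Commute a y ∨ a * y = 0) → (∃ y ∈ l, a * y = 0) →
      a * l.prod = 0
  | [], _, ⟨_, hy, _⟩ => absurd hy List.not_mem_nil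
  | x :: t, h, ⟨y, hy, hay⟩ => by
    rw [List.prod_cons, ← mul_assoc]
    by_cases hax : a * x = 0
    · rw [hax, zero_mul]
    have hyt : y ∈ t := (List.mem_cons.1 hy).resolve_left (by rintro rfl; exact hax hay)
    rw [((h x (by simp)).resolve_right hax).eq, mul_assoc,
      mul_list_prod_eq_zero (fun z hz => h z (by simp [hz])) ⟨y, hyt, hay⟩, mul_zero]

theorem list_prod_mul_eq_zero [MonoidWithZero M] {b : M} {l : List M}
    (h : ∀ y ∈ l, Commute y b ∨ y * b = 0) (hzero : ∃ y ∈ l, y * b = 0) : l.prod * b = 0 := by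
  induction l using List.reverseRecOn with
  | nil => obtain ⟨_, hy, _⟩ := hzero; exact absurd hy List.not_mem_nil
  | append_singleton t x ih =>
    obtain ⟨y, hy, hyb⟩ := hzero
    rw [List.prod_append, List.prod_singleton, mul_assoc]
    by_cases hxb : x * b = 0
    · rw [hxb, mul_zero]
    have hyt : y ∈ t := (List.mem_append.1 hy).resolve_right 
      (by rw [List.mem_singleton]; rintro rfl; exact hxb hyb)
    rw [((h x (by simp)).resolve_right hxb).eq, ← mul_assoc,
      ih (fun z hz => h z (by simp [hz])) ⟨y, hyt, hyb⟩, zero_mul]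

theorem list_prod_sub_one_mem [Ring M] {I : Submodule M M} {l : List M}
    (h : ∀ x ∈ l, x - 1 ∈ I) : l.prod - 1 ∈ I := by
  refine List.prod_induction (· - 1 ∈ I) (fun x y hx hy => ?_) (by simp) h
  have hxy : x * y - 1 = x • (y - 1) + (x - 1) := by simp [smul_eq_mul, mul_sub]
  simpa only [hxy] using I.add_mem (I.smul_mem x hy) hx

theorem commute_mul_of_anticommute [Monoid M] [HasDistribNeg M] {a b c : M}
    (ha : c * a = -(a * c)) (hb : c * b = -(b * c)) : Commute c (a * b) := by
  rw [Commute, SemiconjBy, ← mul_assoc, ha, neg_mul, mul_assoc, hb, mul_neg, neg_neg, mul_assoc]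

end

/-- The squares are required separately since the anticommutation relations at `i = j` only give
`2 * a i * a i = 0`. -/
structure CanonicalAnticommutation {R ι : Type*} [Ring R] [DecidableEq ι] (a b : ι → R) :
    Prop where
  mul_self_left : ∀ i, a i * a i = 0
  mul_self_right : ∀ i, b i * b i = 0
  anticomm_left : ∀ i j, a i * a j + a j * a i = 0
  anticomm_right : ∀ i j, b i * b j + b j * b i = 0
  anticomm_left_right : ∀ i j, a i * b j + b j * a i = if i = j then 1 else 0

namespace CanonicalAnticommutation

variable {R ι : Type*} [Ring R] [DecidableEq ι] {a b : ι → R} (h : CanonicalAnticommutation a b)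
include h

theorem isIdempotentElem_mul (i : ι) : IsIdempotentElem (a i * b i) := by
  have hba : b i * a i = 1 - a i * b i :=
    eq_sub_of_add_eq' (by simpa using h.anticomm_left_right i i)
  calc a i * b i * (a i * b i) = a i * (b i * a i) * b i := by noncomm_ring
    _ = a i * b i - a i * a i * (b i * b i) := by rw [hba]; noncomm_ring
    _ = a i * b i := by rw [h.mul_self_left, zero_mul, sub_zero]

theorem left_mul_right_of_ne {i j : ι} (hij : i ≠ j) : a i * b j = -(b j * a i) :=
  eq_neg_of_add_eq_zero_left (by simpa [hij] using h.anticomm_left_right i j)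

theorem commute_left {i j : ι} (hij : i ≠ j) : Commute (a j) (a i * b i) :=
  commute_mul_of_anticommute (eq_neg_of_add_eq_zero_left (h.anticomm_left j i))
    (h.left_mul_right_of_ne hij.symm)

theorem commute_right {i j : ι} (hij : i ≠ j) : Commute (b j) (a i * b i) :=
  commute_mul_of_anticommute (neg_eq_iff_eq_neg.1 (h.left_mul_right_of_ne hij).symm)
    (eq_neg_of_add_eq_zero_left (h.anticomm_right j i))

theorem commute_mul (i j : ι) : Commute (a i * b i) (a j * b j) := by
  rcases eq_or_ne i j with rfl | hij
  · exact .refl _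
  · exact ((h.commute_left hij).mul_left (h.commute_right hij)).symm

theorem isIdempotentElem_prod (l : List ι) :
    IsIdempotentElem (l.map fun i => a i * b i).prod := by
  refine IsIdempotentElem.list_prod ?_ ?_ <;> simp only [List.forall_mem_map]
  · exact fun i _ j _ => h.commute_mul i j
  · exact fun i _ => h.isIdempotentElem_mul i

theorem left_mul_prod_eq_zero {l : List ι} {j : ι} (hj : j ∈ l) :
    a j * (l.map fun i => a i * b i).prod = 0 := by
  refine mul_list_prod_eq_zero ?_ ⟨a j * b j, List.mem_map_of_mem hj, ?_⟩
  · simp only [List.forall_mem_map]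
    intro i _
    rcases eq_or_ne i j with rfl | hij
    · exact .inr (by rw [← mul_assoc, h.mul_self_left, zero_mul])
    · exact .inl (h.commute_left hij)
  · rw [← mul_assoc, h.mul_self_left, zero_mul]

theorem prod_mul_right_eq_zero {l : List ι} {j : ι} (hj : j ∈ l) :
    (l.map fun i => a i * b i).prod * b j = 0 := by
  refine list_prod_mul_eq_zero ?_ ⟨a j * b j, List.mem_map_of_mem hj, ?_⟩
  · simp only [List.forall_mem_map]
    intro i _
    rcases eq_or_ne i j with rfl | hij
    · exact .inr (by rw [mul_assoc, h.mul_self_right, mul_zero])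
    · exact .inl (h.commute_right hij).symm
  · rw [mul_assoc, h.mul_self_right, mul_zero]

theorem prod_sub_one_mem {I : Submodule R R} (hI : ∀ i, a i ∈ I) (l : List ι) :
    (l.map fun i => a i * b i).prod - 1 ∈ I := by
  refine list_prod_sub_one_mem ?_
  simp only [List.forall_mem_map]
  intro i _
  have hab : a i * b i - 1 = -b i * a i := by
    rw [neg_mul, eq_neg_iff_add_eq_zero, sub_add_eq_add_sub, sub_eq_zero]
    simpa using h.anticomm_left_right i i
  rw [hab]
  exact I.smul_mem _ (hI i)

end CanonicalAnticommutation

namespace LinearMap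

variable {K V A : Type*} [CommSemiring K] [AddCommMonoid V] [Module K V] [Semiring A]
  [Algebra K A] (φ : V →ₗ[K] A) {s : Set V} {x : A}

theorem map_mul_eq_zero_of_mem_span (hs : ∀ v ∈ s, φ v * x = 0) {w : V}
    (hw : w ∈ Submodule.span K s) : φ w * x = 0 :=
  (Submodule.span_le (p := ker (mulRight K x ∘ₗ φ)).2 hs) hw

theorem mul_map_eq_zero_of_mem_span (hs : ∀ v ∈ s, x * φ v = 0) {w : V}
    (hw : w ∈ Submodule.span K s) : x * φ w = 0 :=
  (Submodule.span_le (p := ker (mulLeft K x ∘ₗ φ)).2 hs) hw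

end LinearMap

namespace CliffordAlgebra

variable {K W : Type*} [Field K] [AddCommGroup W] [Module K W]
  {B : LinearMap.BilinForm K W}

theorem ι_mul_ι_add_swap_of_half [NeZero (2 : K)] (hB : B.IsSymm) (u v : W) :
    ι ((1 / 2 : K) • B).toQuadraticMap u * ι ((1 / 2 : K) • B).toQuadraticMap v +
      ι ((1 / 2 : K) • B).toQuadraticMap v * ι ((1 / 2 : K) • B).toQuadraticMap u =
      algebraMap K _ (B u v) := by
  rw [ι_mul_ι_add_swap, LinearMap.BilinMap.polar_toQuadraticMap]
  have hvu : B v u = B u v := hB.eq v u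
  simp only [LinearMap.smul_apply, smul_eq_mul, hvu]
  congr 1
  field_simp
  ring

theorem ι_mul_self_of_half {u : W} (hu : B u u = 0) :
    ι ((1 / 2 : K) • B).toQuadraticMap u * ι ((1 / 2 : K) • B).toQuadraticMap u = 0 := by
  rw [ι_sq_scalar, LinearMap.BilinMap.toQuadraticMap_apply, LinearMap.smul_apply,
    LinearMap.smul_apply, hu, smul_zero, map_zero]

theorem canonicalAnticommutation_ι_of_half [NeZero (2 : K)] {κ : Type*} [DecidableEq κ]
    (hB : B.IsSymm) {e f : κ → W} (hee : ∀ i j, B (e i) (e j) = 0) (hff : ∀ i j, B (f i) (f j) = 0)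
    (hef : ∀ i j, B (e i) (f j) = if i = j then (1 : K) else 0) :
    CanonicalAnticommutation (fun i => ι ((1 / 2 : K) • B).toQuadraticMap (e i))
      (fun i => ι ((1 / 2 : K) • B).toQuadraticMap (f i)) where
  mul_self_left i := ι_mul_self_of_half (hee i i)
  mul_self_right i := ι_mul_self_of_half (hff i i)
  anticomm_left i j := by rw [ι_mul_ι_add_swap_of_half hB, hee, map_zero]
  anticomm_right i j := by rw [ι_mul_ι_add_swap_of_half hB, hff, map_zero]
  anticomm_left_right i j := by
    rw [ι_mul_ι_add_swap_of_half hB, hef]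
    split_ifs
    exacts [map_one _, map_zero _]

end CliffordAlgebra

theorem stmt12_general {W : Type*} [AddCommGroup W] [Module ℝ W]
    (B : LinearMap.BilinForm ℝ W) (hsymm : B.IsSymm)
    (n : ℕ) (e f : Fin n → W)
    (hee : ∀ i j, B (e i) (e j) = 0)
    (hff : ∀ i j, B (f i) (f j) = 0)
    (hef : ∀ i j, B (e i) (f j) = if i = j then (1 : ℝ) else 0)
    (p : CliffordAlgebra (((1/2 : ℝ) • B).toQuadraticMap))
    (hp : p = (List.ofFn (fun i : Fin n =>
        CliffordAlgebra.ι (((1/2 : ℝ) • B).toQuadraticMap) (e i) *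
          CliffordAlgebra.ι (((1/2 : ℝ) • B).toQuadraticMap) (f i))).prod) :
    p * p = p ∧
    (∀ w ∈ Submodule.span ℝ (Set.range e),
        CliffordAlgebra.ι (((1/2 : ℝ) • B).toQuadraticMap) w * p = 0) ∧
    (∀ w ∈ Submodule.span ℝ (Set.range f),
        p * CliffordAlgebra.ι (((1/2 : ℝ) • B).toQuadraticMap) w = 0) ∧
    p - 1 ∈ Submodule.span (CliffordAlgebra (((1/2 : ℝ) • B).toQuadraticMap))
        (CliffordAlgebra.ι (((1/2 : ℝ) • B).toQuadraticMap) ''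
          ((Submodule.span ℝ (Set.range e) : Submodule ℝ W) : Set W)) := by
  have h := CliffordAlgebra.canonicalAnticommutation_ι_of_half hsymm hee hff hef
  rw [List.ofFn_eq_map] at hp
  subst hp
  refine ⟨h.isIdempotentElem_prod _, fun w hw => ?_, fun w hw => ?_, ?_⟩
  · refine LinearMap.map_mul_eq_zero_of_mem_span _ ?_ hw
    rintro _ ⟨j, rfl⟩
    exact h.left_mul_prod_eq_zero (List.mem_finRange j)
  · refine LinearMap.mul_map_eq_zero_of_mem_span _ ?_ hw
    rintro _ ⟨j, rfl⟩
    exact h.prod_mul_right_eq_zero (List.mem_finRange j)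
  · refine h.prod_sub_one_mem (fun i => Submodule.subset_span ?_) _
    exact ⟨e i, Submodule.subset_span ⟨i, rfl⟩, rfl⟩

/-- Let `(W,B)` be a split real quadratic space with transverse Lagrangian
subspaces `E = span(e₁,…,eₙ)` and `F = span(f¹,…,fⁿ)` where `B(eᵢ,eⱼ) = 0`,
`B(fⁱ,fʲ) = 0` and `B(eᵢ,fʲ) = δᵢʲ`.  Then `p = ∏ᵢ eᵢ fⁱ ∈ Cl(W)` satisfies
`p² = p`, `E·p = 0`, `p·F = 0` and `p − 1 ∈ Cl(W)·E`.
(Clifford convention: `Q = (1/2) • B`, so `w₁w₂ + w₂w₁ = B(w₁,w₂)·1`.) -/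
theorem stmt12 {W : Type*} [AddCommGroup W] [Module ℝ W] [FiniteDimensional ℝ W]
    (B : LinearMap.BilinForm ℝ W) (hsymm : B.IsSymm) (hnd : B.Nondegenerate)
    (n : ℕ) (e f : Fin n → W)
    (he : LinearIndependent ℝ e) (hf : LinearIndependent ℝ f)
    (hspan : Submodule.span ℝ (Set.range e) ⊔ Submodule.span ℝ (Set.range f) = ⊤)
    (hee : ∀ i j, B (e i) (e j) = 0)
    (hff : ∀ i j, B (f i) (f j) = 0)
    (hef : ∀ i j, B (e i) (f j) = if i = j then (1 : ℝ) else 0)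
    (p : CliffordAlgebra (((1/2 : ℝ) • B).toQuadraticMap))
    (hp : p = (List.ofFn (fun i : Fin n =>
        CliffordAlgebra.ι (((1/2 : ℝ) • B).toQuadraticMap) (e i) *
          CliffordAlgebra.ι (((1/2 : ℝ) • B).toQuadraticMap) (f i))).prod) :
    p * p = p ∧
    (∀ w ∈ Submodule.span ℝ (Set.range e),
        CliffordAlgebra.ι (((1/2 : ℝ) • B).toQuadraticMap) w * p = 0) ∧
    (∀ w ∈ Submodule.span ℝ (Set.range f),
        p * CliffordAlgebra.ι (((1/2 : ℝ) • B).toQuadraticMap) w = 0) ∧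
    p - 1 ∈ Submodule.span (CliffordAlgebra (((1/2 : ℝ) • B).toQuadraticMap))
        (CliffordAlgebra.ι (((1/2 : ℝ) • B).toQuadraticMap) ''
          ((Submodule.span ℝ (Set.range e) : Submodule ℝ W) : Set W)) :=
  stmt12_general B hsymm n e f hee hff hef p hp
end

section
/- Let W be a split real quadratic space, 𝒮 an irreducible module over Cl(W), and E ⊂ W a Lagrangian subspace. Then the subspace 𝒮^E = {φ ∈ 𝒮 : ρ(w)φ = 0 for all w ∈ E} is one-dimensional. -/
/-!
Pick a basis `eᵢ` of `E` and, by nondegeneracy, vectors `fᵢ` with `B(eᵢ, fⱼ) = δᵢⱼ`; subtracting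
half of their mutual pairings along the `eⱼ` makes them isotropic. Since `E = E^⊥`, the `eᵢ, fᵢ`
span `W`, so `ι eᵢ, ι fᵢ` satisfy the canonical anticommutation relations and generate `Cl(W)`.
Applying to a nonzero spinor every `ι eᵢ` that does not kill it yields a nonzero `φ` killed by `E`.
By simplicity every spinor is `a • φ`, and `a • φ` lies in the span of the `f`-monomials applied
to `φ`. The product `∏ ι eᵢ ι fᵢ` fixes every spinor killed by `E` and kills every nonempty
`f`-monomial, so such a spinor lies in `ℝ φ`.
-/

open CliffordAlgebra Submodule

section
variable {κ : Type*}

section Anticommuting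
variable {R A M : Type*} [Ring A] [AddCommGroup M] [Module A M]

theorem exists_ne_zero_forall_smul_eq_zero [Finite κ] [Nontrivial M] {e : κ → A}
    (he : ∀ i j, e i * e j + e j * e i = 0) (he' : ∀ i, e i * e i = 0) :
    ∃ φ : M, φ ≠ 0 ∧ ∀ i, e i • φ = 0 := by
  classical
  have := Fintype.ofFinite κ
  suffices ∀ s : Finset κ, ∃ φ : M, φ ≠ 0 ∧ ∀ i ∈ s, e i • φ = 0 by
    simpa using this Finset.univ
  intro s
  induction s using Finset.induction_on with
  | empty => simpa using exists_ne (0 : M)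
  | insert j s _ ih =>
    obtain ⟨φ, hφ0, hφ⟩ := ih
    by_cases hj : e j • φ = 0
    · exact ⟨φ, hφ0, by simpa [hj] using hφ⟩
    refine ⟨e j • φ, hj, ?_⟩
    simp only [Finset.mem_insert, forall_eq_or_imp, ← mul_smul, he', zero_smul, true_and]
    intro i hi
    rw [eq_neg_of_add_eq_zero_left (he i j), neg_smul, mul_smul, hφ i hi, smul_zero, neg_zero]

variable (R) in
def fockSpan [Semiring R] [Module R M] (f : κ → A) (φ : M) : Submodule R M :=
  span R (Set.range fun S : List κ => (S.map f).prod • φ)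

variable [CommRing R] [Algebra R A] [Module R M] [IsScalarTower R A M]

theorem smul_mem_of_mem_span {s : Set M} {N : Submodule R M} {a : A} (hs : ∀ x ∈ s, a • x ∈ N)
    {x : M} (hx : x ∈ span R s) : a • x ∈ N :=
  (span_le (p := N.comap (DistribSMul.toLinearMap R M a))).mpr hs hx

theorem smul_mem_fockSpan {f : κ → A} {φ : M} (i : κ) {x : M} (hx : x ∈ fockSpan R f φ) :
    f i • x ∈ fockSpan R f φ := by
  refine smul_mem_of_mem_span ?_ hx
  rintro _ ⟨S, rfl⟩
  exact subset_span ⟨i :: S, by simp [mul_smul]⟩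

end Anticommuting

section CAR
variable {R A M : Type*} [DecidableEq κ] [Ring A]

/-- The canonical anticommutation relations. -/
structure IsCAR (e f : κ → A) : Prop where
  e_mul_e_add : ∀ i j, e i * e j + e j * e i = 0
  f_mul_f_add : ∀ i j, f i * f j + f j * f i = 0
  e_mul_f_add : ∀ i j, e i * f j + f j * e i = if i = j then 1 else 0
  e_mul_self : ∀ i, e i * e i = 0
  f_mul_self : ∀ i, f i * f i = 0

def vacuumProj (e f : κ → A) (l : List κ) : A := (l.map fun i => e i * f i).prod

namespace IsCAR
variable {e f : κ → A} (h : IsCAR e f)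
include h

theorem e_mul_f_eq_sub (i j : κ) : e i * f j = (if i = j then 1 else 0) - f j * e i :=
  eq_sub_of_add_eq (h.e_mul_f_add i j)

theorem commute_e_mul_f {i j : κ} (hij : i ≠ j) : Commute (e i * f i) (f j) := by
  have hf : f i * f j = -(f j * f i) := eq_neg_of_add_eq_zero_left (h.f_mul_f_add i j)
  have hef : e i * f j = -(f j * e i) := by simpa [hij] using h.e_mul_f_eq_sub i j
  rw [Commute, SemiconjBy, mul_assoc, hf, mul_neg, ← mul_assoc, hef, neg_mul, neg_neg,
    mul_assoc]

theorem vacuumProj_mul_f {l : List κ} {j : κ} (hj : j ∈ l) : vacuumProj e f l * f j = 0 := by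
  induction l with
  | nil => simp at hj
  | cons i l ih =>
    simp only [vacuumProj, List.map_cons, List.prod_cons] at ih ⊢
    by_cases hjl : j ∈ l
    · rw [mul_assoc, ih hjl, mul_zero]
    obtain rfl : j = i := by simpa [hjl] using hj
    have hcomm : Commute (l.map fun i => e i * f i).prod (f j) :=
      Commute.list_prod_left _ _ fun y hy => by
        obtain ⟨k, hk, rfl⟩ := List.mem_map.mp hy
        exact h.commute_e_mul_f (ne_of_mem_of_not_mem hk hjl)
    rw [mul_assoc, hcomm.eq, ← mul_assoc, mul_assoc (e j), h.f_mul_self, mul_zero, zero_mul]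

variable [AddCommGroup M] [Module A M]

theorem vacuumProj_smul {l : List κ} {ψ : M} (hψ : ∀ i ∈ l, e i • ψ = 0) :
    vacuumProj e f l • ψ = ψ := by
  induction l with
  | nil => simp [vacuumProj]
  | cons i l ih =>
    simp only [List.mem_cons, forall_eq_or_imp] at hψ
    simp only [vacuumProj, List.map_cons, List.prod_cons] at ih ⊢
    rw [mul_smul, ih hψ.2, h.e_mul_f_eq_sub, if_pos rfl, sub_smul, one_smul, mul_smul, hψ.1,
      smul_zero, sub_zero]

variable [CommRing R] [Algebra R A] [Module R M] [IsScalarTower R A M]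

theorem e_smul_mem_fockSpan {φ : M} (hφ : ∀ i, e i • φ = 0) (i : κ) {x : M}
    (hx : x ∈ fockSpan R f φ) : e i • x ∈ fockSpan R f φ := by
  refine smul_mem_of_mem_span ?_ hx
  rintro _ ⟨S, rfl⟩
  dsimp only
  induction S with
  | nil => simp [hφ]
  | cons s S ih =>
    rw [List.map_cons, List.prod_cons, mul_smul, ← mul_smul, h.e_mul_f_eq_sub, sub_smul,
      mul_smul]
    refine sub_mem ?_ (smul_mem_fockSpan s ih)
    split_ifs
    · exact one_smul A (_ : M) ▸ subset_span ⟨S, rfl⟩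
    · simp

theorem adjoin_smul_mem_fockSpan {φ : M} (hφ : ∀ i, e i • φ = 0) {a : A}
    (ha : a ∈ Algebra.adjoin R (Set.range e ∪ Set.range f)) : a • φ ∈ fockSpan R f φ := by
  suffices ∀ x ∈ fockSpan R f φ, a • x ∈ fockSpan R f φ from this φ (subset_span ⟨[], by simp⟩)
  induction ha using Algebra.adjoin_induction with
  | mem a ha =>
    rcases ha with ⟨i, rfl⟩ | ⟨i, rfl⟩
    exacts [fun _ => h.e_smul_mem_fockSpan hφ i, fun _ => smul_mem_fockSpan i]
  | algebraMap r => exact fun x hx => by simpa only [algebraMap_smul] using smul_mem _ r hx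
  | add a b _ _ ha hb =>
    exact fun x hx => by simpa only [add_smul] using add_mem (ha x hx) (hb x hx)
  | mul a b _ _ ha hb => exact fun x hx => by simpa only [mul_smul] using ha _ (hb x hx)

theorem vacuumProj_smul_mem_span_singleton [Fintype κ] {φ : M} (hφ : ∀ i, e i • φ = 0) {x : M}
    (hx : x ∈ fockSpan R f φ) : vacuumProj e f Finset.univ.toList • x ∈ R ∙ φ := by
  refine smul_mem_of_mem_span ?_ hx
  rintro _ ⟨S, rfl⟩
  dsimp only
  cases S with
  | nil => simp [h.vacuumProj_smul fun i _ => hφ i]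
  | cons s S =>
    rw [List.map_cons, List.prod_cons, ← mul_smul, ← mul_assoc,
      h.vacuumProj_mul_f (Finset.mem_toList.mpr (Finset.mem_univ s)), zero_mul, zero_smul]
    exact zero_mem _

theorem exists_eq_smul [Fintype κ] [IsSimpleModule A M]
    (hgen : Algebra.adjoin R (Set.range e ∪ Set.range f) = ⊤) {φ ψ : M} (hφ0 : φ ≠ 0)
    (hφ : ∀ i, e i • φ = 0) (hψ : ∀ i, e i • ψ = 0) : ∃ c : R, ψ = c • φ := by
  obtain ⟨a, rfl⟩ : ∃ a : A, a • φ = ψ := IsSimpleModule.toSpanSingleton_surjective A hφ0 ψ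
  have ha : a • φ ∈ fockSpan R f φ := h.adjoin_smul_mem_fockSpan hφ (hgen ▸ Algebra.mem_top)
  obtain ⟨c, hc⟩ := mem_span_singleton.mp (h.vacuumProj_smul_mem_span_singleton hφ ha)
  exact ⟨c, by rwa [h.vacuumProj_smul fun i _ => hψ i, eq_comm] at hc⟩

end IsCAR
end CAR

section Lagrangian
variable {K V : Type*}

theorem Module.Basis.apply_eq_zero_of_mem {R N : Type*} [Semiring R] [AddCommMonoid V]
    [Module R V] [AddCommMonoid N] [Module R N] {E : Submodule R V} (b : Module.Basis κ R E)
    {g : V →ₗ[R] N} (hg : ∀ i, g (b i) = 0) {w : V} (hw : w ∈ E) : g w = 0 :=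
  LinearMap.congr_fun (b.ext (f₁ := g ∘ₗ E.subtype) (f₂ := 0) hg) ⟨w, hw⟩

namespace LinearMap.BilinForm
variable [DecidableEq κ] [Field K] [AddCommGroup V] [Module K V] {B : LinearMap.BilinForm K V}

theorem exists_dual_family [FiniteDimensional K V] (hB : B.Nondegenerate) {E : Submodule K V}
    (b : Module.Basis κ K E) : ∃ f : κ → V, ∀ i j, B (f i) (b j) = if i = j then 1 else 0 := by
  obtain ⟨g, hg⟩ := E.subtype.exists_leftInverse_of_injective E.ker_subtype
  refine ⟨fun i => (B.toDual hB).symm (b.coord i ∘ₗ g), fun i j => ?_⟩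
  have hgb : g (b j) = b j := LinearMap.congr_fun hg (b j)
  rw [apply_toDual_symm_apply, LinearMap.comp_apply, hgb, b.coord_apply, b.repr_self,
    Finsupp.single_apply]
  exact if_congr eq_comm rfl rfl

theorem exists_isotropic_dual_family [Fintype κ] [NeZero (2 : K)] (hB : B.IsSymm) {e f : κ → V}
    (he : ∀ i j, B (e i) (e j) = 0) (hf : ∀ i j, B (f i) (e j) = if i = j then 1 else 0) :
    ∃ f' : κ → V, (∀ i j, B (f' i) (f' j) = 0) ∧
      ∀ i j, B (f' i) (e j) = if i = j then 1 else 0 := by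
  have hf' : ∀ i j, B (e j) (f i) = if i = j then 1 else 0 := fun i j => by rw [← hf, hB.eq]
  -- the `½` splits the symmetric defect `B (f i) (f j)` evenly between `i` and `j`
  refine ⟨fun i => f i - (2⁻¹ : K) • ∑ j, B (f i) (f j) • e j, fun i k => ?_, fun i k => ?_⟩
  · simp only [map_sub, map_smul, map_sum, LinearMap.sub_apply, LinearMap.smul_apply,
      LinearMap.sum_apply, smul_eq_mul, he, hf, hf', mul_zero, mul_ite, mul_one,
      sub_zero, Finset.sum_ite_eq, Finset.mem_univ, if_true, Finset.sum_const_zero]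
    rw [hB.eq (f k) (f i)]
    have : (2 : K) ≠ 0 := two_ne_zero
    field_simp
    ring
  · simp [he, hf]

theorem span_basis_union_dual_eq_top [Fintype κ] {E : Submodule K V}
    (hLag : (E : Set V) = {w | ∀ x ∈ E, B w x = 0}) (b : Module.Basis κ K E) {f : κ → V}
    (hf : ∀ i j, B (f i) (b j) = if i = j then 1 else 0) :
    span K (Set.range (fun i => (b i : V)) ∪ Set.range f) = ⊤ := by
  refine eq_top_iff'.mpr fun w => ?_
  -- subtracting the `f`-components of `w` leaves a vector orthogonal to `E`, hence in `E`
  set r := w - ∑ i, B w (b i) • f i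
  have hr : r ∈ E := by
    rw [← SetLike.mem_coe, hLag]
    refine fun x hx => b.apply_eq_zero_of_mem (g := B r) (fun j => ?_) hx
    simp [r, hf]
  have hrE : r ∈ span K (Set.range fun i => (b i : V)) := by
    refine (mem_span_range_iff_exists_fun K).mpr ⟨b.repr ⟨r, hr⟩, ?_⟩
    simpa only [AddSubmonoidClass.coe_finsetSum, SetLike.val_smul] using
      congrArg Subtype.val (b.sum_repr ⟨r, hr⟩)
  have hfs : ∑ i, B w (b i) • f i ∈ span K (Set.range f) :=
    sum_mem fun i _ => smul_mem _ _ (subset_span ⟨i, rfl⟩)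
  simpa [r] using add_mem (span_mono Set.subset_union_left hrE)
    (span_mono Set.subset_union_right hfs)

end LinearMap.BilinForm
end Lagrangian

namespace CliffordAlgebra
variable {R V : Type*} [CommRing R] [AddCommGroup V] [Module R V]

theorem adjoin_image_ι_eq_top {Q : QuadraticForm R V} {s : Set V} (hs : span R s = ⊤) :
    Algebra.adjoin R (ι Q '' s) = ⊤ := by
  refine eq_top_iff.mpr (adjoin_range_ι (Q := Q) ▸ Algebra.adjoin_le ?_)
  rintro _ ⟨v, rfl⟩
  have hv : ι Q v ∈ span R (ι Q '' s) := map_span (ι Q) s ▸ mem_map_of_mem (hs ▸ mem_top)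
  exact Algebra.span_le_adjoin R _ hv

theorem ι_mul_self_eq_zero [Invertible (2 : R)] {Q : QuadraticForm R V} {v : V}
    (hv : QuadraticMap.polar Q v v = 0) : ι Q v * ι Q v = 0 := by
  rw [QuadraticMap.polar_self, nsmul_eq_mul, Nat.cast_ofNat] at hv
  rw [ι_sq_scalar, (isUnit_of_invertible (2 : R)).mul_right_eq_zero.mp hv, map_zero]

theorem isCAR_ι [DecidableEq κ] [Invertible (2 : R)] {Q : QuadraticForm R V} {e f : κ → V}
    (hee : ∀ i j, QuadraticMap.polar Q (e i) (e j) = 0)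
    (hff : ∀ i j, QuadraticMap.polar Q (f i) (f j) = 0)
    (hef : ∀ i j, QuadraticMap.polar Q (e i) (f j) = if i = j then 1 else 0) :
    IsCAR (ι Q ∘ e) (ι Q ∘ f) where
  e_mul_e_add i j := by simp [ι_mul_ι_add_swap, hee]
  f_mul_f_add i j := by simp [ι_mul_ι_add_swap, hff]
  e_mul_f_add i j := by
    rw [Function.comp_apply, Function.comp_apply, ι_mul_ι_add_swap, hef, apply_ite (algebraMap R _),
      map_one, map_zero]
  e_mul_self i := ι_mul_self_eq_zero (hee i i)
  f_mul_self i := ι_mul_self_eq_zero (hff i i)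

end CliffordAlgebra

end

theorem CliffordAlgebra.exists_line_annihilated_by_lagrangian {K W M : Type*} [Field K]
    [NeZero (2 : K)] [AddCommGroup W] [Module K W] [FiniteDimensional K W]
    {B : LinearMap.BilinForm K W} (hsymm : B.IsSymm) (hnd : B.Nondegenerate) {E : Submodule K W}
    (hLag : (E : Set W) = {w : W | ∀ e ∈ E, B w e = 0}) {Q : QuadraticForm K W}
    (hQ : ∀ x y, QuadraticMap.polar Q x y = B x y) [AddCommGroup M] [Module K M]
    [Module (CliffordAlgebra Q) M] [IsScalarTower K (CliffordAlgebra Q) M]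
    [IsSimpleModule (CliffordAlgebra Q) M] :
    ∃ φ : M, φ ≠ 0 ∧ (∀ w ∈ E, ι Q w • φ = 0) ∧
      ∀ ψ : M, (∀ w ∈ E, ι Q w • ψ = 0) → ∃ c : K, ψ = c • φ := by
  classical
  have := invertibleOfNonzero (two_ne_zero : (2 : K) ≠ 0)
  have := IsSimpleModule.nontrivial (CliffordAlgebra Q) M
  have hiso {x y : W} (hx : x ∈ E) (hy : y ∈ E) : B x y = 0 := hLag.subset hx y hy
  let b := Module.finBasis K E
  let e : _ → W := fun i => b i
  obtain ⟨f₀, hf₀⟩ := B.exists_dual_family hnd b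
  obtain ⟨f, hff, hfe⟩ := B.exists_isotropic_dual_family hsymm (e := e)
    (fun i j => hiso (b i).2 (b j).2) hf₀
  have hCAR : IsCAR (ι Q ∘ e) (ι Q ∘ f) :=
    isCAR_ι (by simp [e, hQ, hiso]) (by simp [hQ, hff]) fun i j => by
      rw [hQ, hsymm.eq, hfe]
      exact if_congr eq_comm rfl rfl
  have hgen : Algebra.adjoin K (Set.range (ι Q ∘ e) ∪ Set.range (ι Q ∘ f)) = ⊤ := by
    rw [Set.range_comp, Set.range_comp, ← Set.image_union]
    exact adjoin_image_ι_eq_top (B.span_basis_union_dual_eq_top hLag b hfe)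
  obtain ⟨φ, hφ0, hφ⟩ := exists_ne_zero_forall_smul_eq_zero (M := M) hCAR.e_mul_e_add
    hCAR.e_mul_self
  refine ⟨φ, hφ0, fun w hw => b.apply_eq_zero_of_mem (g := (ι Q).smulRight φ) hφ hw,
    fun ψ hψ => hCAR.exists_eq_smul hgen hφ0 hφ fun i => hψ _ (b i).2⟩

/-- Let `(W,B)` be a finite-dimensional split real quadratic space, `𝒮` an
irreducible module over `Cl(W)` and `E ⊂ W` a Lagrangian subspace.  Then the subspace
`𝒮^E = {φ : ρ(w)φ = 0 ∀ w ∈ E}` is one-dimensional: it contains a nonzero `φ`, and every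
element of it is a real multiple of `φ`.  (Convention `Q = (1/2) • B`.) -/
theorem stmt13 {W : Type*} [AddCommGroup W] [Module ℝ W] [FiniteDimensional ℝ W]
    (B : LinearMap.BilinForm ℝ W) (hsymm : B.IsSymm) (hnd : B.Nondegenerate)
    (E : Submodule ℝ W)
    (hLag : (E : Set W) = {w : W | ∀ e ∈ E, B w e = 0})
    (𝒮 : Type*) [AddCommGroup 𝒮] [Module ℝ 𝒮]
    [Module (CliffordAlgebra (((1/2 : ℝ) • B).toQuadraticMap)) 𝒮]
    [IsScalarTower ℝ (CliffordAlgebra (((1/2 : ℝ) • B).toQuadraticMap)) 𝒮]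
    [IsSimpleModule (CliffordAlgebra (((1/2 : ℝ) • B).toQuadraticMap)) 𝒮] :
    ∃ φ : 𝒮, φ ≠ 0 ∧
      (∀ w ∈ E, CliffordAlgebra.ι (((1/2 : ℝ) • B).toQuadraticMap) w • φ = 0) ∧
      ∀ ψ : 𝒮, (∀ w ∈ E, CliffordAlgebra.ι (((1/2 : ℝ) • B).toQuadraticMap) w • ψ = 0) →
        ∃ c : ℝ, ψ = c • φ := by
  refine exists_line_annihilated_by_lagrangian hsymm hnd hLag (fun x y => ?_)
  simp only [LinearMap.BilinMap.polar_toQuadraticMap, LinearMap.smul_apply, smul_eq_mul,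
    hsymm.eq y x]
  ring
end

section
/- Let V be an n-dimensional real vector space and identify the contravariant spinor module for 𝕍 = V ⊕ V* with the exterior algebra ΛV*, where v ∈ V acts by contraction ι_v and α ∈ V* acts by exterior multiplication α∧·. For pure spinors φ, ψ ∈ ΛV* with Lagrangian null spaces N_φ, N_ψ ⊂ 𝕍, the Chevalley pairing (φ,ψ) = (φ^⊤ ∧ ψ)_{[n]} (top-degree component, where ⊤ reverses forms degree-by-degree with sign (−1)^{k(k−1)/2} on degree k) is nonzero if and only if N_φ and N_ψ are transverse (N_φ ∩ N_ψ = 0). -/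
set_option synthInstance.maxHeartbeats 1000000
set_option maxHeartbeats 1000000
open Module

/-- The contravariant spinor action of `𝕍 = V ⊕ V*` on `ΛV*`:
`ρ(v ⊕ α)φ = α ∧ φ + ι_v φ` (contraction by `v` via `V ≅ V**`). -/
noncomputable def rho {V : Type*} [AddCommGroup V] [Module ℝ V]
    (w : V × Module.Dual ℝ V) (φ : ExteriorAlgebra ℝ (Module.Dual ℝ V)) :
    ExteriorAlgebra ℝ (Module.Dual ℝ V) :=
  ExteriorAlgebra.ι ℝ w.2 * φ +
    CliffordAlgebra.contractLeft (Module.Dual.eval ℝ V w.1) φ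

/-- The null space `N_φ = {w ∈ 𝕍 : ρ(w)φ = 0}` of a spinor `φ ∈ ΛV*`. -/
def nullSet {V : Type*} [AddCommGroup V] [Module ℝ V]
    (φ : ExteriorAlgebra ℝ (Module.Dual ℝ V)) : Set (V × Module.Dual ℝ V) :=
  {w | rho w φ = 0}


/-!
Contraction and exterior multiplication are adjoint for the pairing `(a, b) ↦ (aᵀ ∧ b)_{[n]}`,
so every `ρ(w)` is self-adjoint. If `0 ≠ w ∈ N_φ ∩ N_ψ`, choose `w'` with `⟨w, w'⟩ ≠ 0`; then `φ`
is a nonzero multiple of `ρ(w)ρ(w')φ`, and `(φ, ψ)` is a multiple of `(ρ(w')φ, ρ(w)ψ) = 0`.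

Conversely, transverse Lagrangians give `𝕍 = N_φ ⊕ N_ψ`. The smallest subspace `U` containing `ψ`
and stable under `ρ(N_φ)` is then stable under all of `ρ(𝕍)`, since `ρ(N_ψ)` can be anticommuted
through to `ψ`, which it kills; and if `(φ, ψ) = 0`, then `φ` pairs to zero with `U`.
This is impossible: by Euler's identity, repeated contractions carry `φ` (within the annihilator
of `U`) and `ψ` (within `U`) to spinors `a`, `b` with nonzero scalar parts, and then
`(a, Θ ∧ b)` is a nonzero multiple of a volume form `Θ`.
-/

namespace CliffordAlgebra

variable {R M : Type*} [CommRing R] [AddCommGroup M] [Module R M] {Q : QuadraticForm R M}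

theorem contractLeft_mul (d : Module.Dual R M) (x y : CliffordAlgebra Q) :
    contractLeft d (x * y) = contractLeft d x * y + involute x * contractLeft d y := by
  induction x using CliffordAlgebra.left_induction with
  | algebraMap r =>
      simp only [← Algebra.smul_def, map_smul, contractLeft_algebraMap,
        involute.commutes, zero_mul, zero_add]
  | add x x' hx hx' =>
      simp only [add_mul, map_add, hx, hx']
      abel
  | ι_mul m x hx =>
      rw [mul_assoc, contractLeft_ι_mul, contractLeft_ι_mul, hx, map_mul, involute_ι]
      simp only [sub_mul, mul_add, smul_mul_assoc, neg_mul, mul_assoc]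
      abel

theorem contractRight_involute (d : Module.Dual R M) (x : CliffordAlgebra Q) :
    contractRight (involute x) d = -contractLeft d x := by
  induction x using CliffordAlgebra.right_induction with
  | algebraMap r => simp
  | add x x' hx hx' => simp only [map_add, LinearMap.add_apply, hx, hx', neg_add]
  | mul_ι m x hx =>
      rw [map_mul, involute_ι, mul_neg, map_neg, LinearMap.neg_apply, contractRight_mul_ι, hx,
        contractLeft_mul, contractLeft_ι]
      simp only [Algebra.smul_def, Algebra.commutes, neg_mul]
      abel

theorem reverse_contractLeft (d : Module.Dual R M) (x : CliffordAlgebra Q) :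
    reverse (contractLeft d x) = -contractLeft d (involute (reverse x)) := by
  rw [← contractRight_involute, involute_involute, contractRight_eq, reverse_reverse]

end CliffordAlgebra

namespace ExteriorAlgebra

open CliffordAlgebra

section CommRing

variable {R M : Type*} [CommRing R] [AddCommGroup M] [Module R M]

local notation "π" => GradedAlgebra.proj (fun i : ℕ => ⋀[R]^i M)

theorem ι_mem_exteriorPower_one (m : M) : ι R m ∈ ⋀[R]^1 M := by
  rw [exteriorPower, pow_one]
  exact LinearMap.mem_range_self _ m

theorem contractLeft_eq_zero_of_mem_exteriorPower_zero {x : ExteriorAlgebra R M}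
    (hx : x ∈ ⋀[R]^0 M) (d : Dual R M) : contractLeft d x = 0 := by
  rw [exteriorPower, pow_zero] at hx
  obtain ⟨r, rfl⟩ := Submodule.mem_one.mp hx
  exact contractLeft_algebraMap _ d r

theorem contractLeft_mem_exteriorPower (d : Dual R M) {k : ℕ} {x : ExteriorAlgebra R M}
    (hx : x ∈ ⋀[R]^(k + 1) M) : contractLeft d x ∈ ⋀[R]^k M := by
  induction k generalizing x with
  | zero =>
      rw [exteriorPower, pow_one] at hx
      obtain ⟨m, rfl⟩ := hx
      rw [contractLeft_ι, exteriorPower, pow_zero]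
      exact Submodule.algebraMap_mem _
  | succ k ih =>
      rw [exteriorPower, pow_succ'] at hx
      refine Submodule.mul_induction_on (C := fun z => contractLeft d z ∈ ⋀[R]^(k + 1) M) hx
        (fun _ ⟨v, hv⟩ y hy => ?_) (fun y z hy hz => by rw [map_add]; exact add_mem hy hz)
      rw [← hv, contractLeft_ι_mul]
      refine sub_mem (Submodule.smul_mem _ _ hy) ?_
      simpa [add_comm] using SetLike.mul_mem_graded (ι_mem_exteriorPower_one v) (ih hy)

theorem proj_mem (k : ℕ) (x : ExteriorAlgebra R M) : π k x ∈ ⋀[R]^k M := by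
  rw [GradedAlgebra.proj_apply]
  exact Submodule.coe_mem _

theorem proj_of_mem_same {k : ℕ} {x : ExteriorAlgebra R M} (hx : x ∈ ⋀[R]^k M) : π k x = x :=
  DirectSum.decompose_of_mem_same (ℳ := fun i : ℕ => ⋀[R]^i M) hx

theorem proj_of_mem_ne {i k : ℕ} {x : ExteriorAlgebra R M} (hx : x ∈ ⋀[R]^i M) (h : i ≠ k) :
    π k x = 0 := by
  rw [GradedAlgebra.proj_apply, DirectSum.decompose_of_mem_ne (ℳ := fun i : ℕ => ⋀[R]^i M) hx h]

theorem eq_zero_of_forall_proj_eq_zero {x : ExteriorAlgebra R M} (h : ∀ k, π k x = 0) :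
    x = 0 := by
  apply (DirectSum.decompose (fun i : ℕ => ⋀[R]^i M)).injective
  ext k
  simpa [GradedAlgebra.proj_apply] using h k

theorem algebraMapInv_ne_zero_of_forall_proj_eq_zero {x : ExteriorAlgebra R M} (hx0 : x ≠ 0)
    (h : ∀ k, 0 < k → π k x = 0) : algebraMapInv x ≠ 0 := by
  have hx : x = π 0 x := by
    refine sub_eq_zero.mp (eq_zero_of_forall_proj_eq_zero fun k => ?_)
    rcases k with _ | k
    · rw [map_sub, proj_of_mem_same (proj_mem 0 x), sub_self]
    · rw [map_sub, h _ k.succ_pos, proj_of_mem_ne (proj_mem 0 x) k.succ_ne_zero.symm, sub_zero]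
  have h0 := proj_mem 0 x
  rw [← hx, exteriorPower, pow_zero] at h0
  obtain ⟨r, rfl⟩ := Submodule.mem_one.mp h0
  rw [algebraMap_leftInverse M r]
  rintro rfl
  exact hx0 (map_zero _)

theorem proj_contractLeft (k : ℕ) (d : Dual R M) (x : ExteriorAlgebra R M) :
    π k (contractLeft d x) = contractLeft d (π (k + 1) x) := by
  induction x using DirectSum.Decomposition.inductionOn (ℳ := fun i : ℕ => ⋀[R]^i M) with
  | zero => simp
  | @homogeneous i x =>
      obtain ⟨x, hx⟩ := x
      by_cases h : i = k + 1
      · subst h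
        rw [proj_of_mem_same hx, proj_of_mem_same (contractLeft_mem_exteriorPower d hx)]
      · rw [proj_of_mem_ne hx h, map_zero]
        rcases i with _ | i
        · rw [contractLeft_eq_zero_of_mem_exteriorPower_zero hx, map_zero]
        · exact proj_of_mem_ne (contractLeft_mem_exteriorPower d hx) (by omega)
  | add x y hx hy => simp only [map_add, hx, hy]

theorem algebraMapInv_ι (m : M) : algebraMapInv (ι R m) = 0 := by
  simp [algebraMapInv]

theorem algebraMapInv_reverse (x : ExteriorAlgebra R M) :
    algebraMapInv (reverse x) = algebraMapInv x := by
  induction x using CliffordAlgebra.induction with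
  | algebraMap r => rw [reverse.commutes]
  | ι m => rw [reverse_ι]
  | mul x y hx hy => rw [reverse.map_mul, map_mul, map_mul, hx, hy, mul_comm]
  | add x y hx hy => rw [map_add, map_add, map_add, hx, hy]

theorem sum_ι_mul_contractLeft_coord {I : Type*} [Fintype I] (b : Basis I R M) {k : ℕ}
    {x : ExteriorAlgebra R M} (hx : x ∈ ⋀[R]^k M) :
    ∑ i, ι R (b i) * contractLeft (b.coord i) x = k • x := by
  induction hx using Submodule.pow_induction_on_left' with
  | algebraMap r => simp
  | add x y i hx hy ihx ihy =>
      simp only [map_add, mul_add, Finset.sum_add_distrib, ihx, ihy, smul_add]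
  | mem_mul m hm i x hx ih =>
      obtain ⟨v, rfl⟩ := hm
      have step : ∀ j, ι R (b j) * contractLeft (b.coord j) (ι R v * x) =
          b.coord j v • (ι R (b j) * x) +
            ι R v * (ι R (b j) * contractLeft (b.coord j) x) := by
        intro j
        rw [contractLeft_ι_mul, mul_sub, mul_smul_comm, ← mul_assoc, ← mul_assoc,
          eq_neg_of_add_eq_zero_left (ι_add_mul_swap (b j) v), neg_mul, sub_neg_eq_add]
      simp_rw [step, Finset.sum_add_distrib, ← Finset.mul_sum, ih, ← smul_mul_assoc,
        ← Finset.sum_mul, ← map_smul, ← map_sum, Basis.coord_apply, Basis.sum_repr, mul_smul_comm,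
        ← succ_nsmul', smul_mul_assoc]

theorem mul_mem_of_forall_ι_mul_mem {U : Submodule R (ExteriorAlgebra R M)}
    (hU : ∀ m, ∀ y ∈ U, ι R m * y ∈ U) (x : ExteriorAlgebra R M) {y : ExteriorAlgebra R M}
    (hy : y ∈ U) : x * y ∈ U := by
  induction x using CliffordAlgebra.induction generalizing y with
  | algebraMap r => simpa only [← Algebra.smul_def, one_mul] using U.smul_mem r hy
  | ι m => exact hU m y hy
  | mul x x' hx hx' => rw [mul_assoc]; exact hx (hx' hy)
  | add x x' hx hx' => rw [add_mul]; exact add_mem (hx hy) (hx' hy)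

variable (R M) in
noncomputable def chevalleyPairing :
    ExteriorAlgebra R M →ₗ[R] ExteriorAlgebra R M →ₗ[R] ExteriorAlgebra R M :=
  ((LinearMap.mul R (ExteriorAlgebra R M)).compl₁₂ (reverse (Q := 0)) LinearMap.id).compr₂
    (π (finrank R M))

theorem chevalleyPairing_apply (x y : ExteriorAlgebra R M) :
    chevalleyPairing R M x y = π (finrank R M) (reverse x * y) := rfl

theorem chevalleyPairing_ι_mul (m : M) (x y : ExteriorAlgebra R M) :
    chevalleyPairing R M (ι R m * x) y = chevalleyPairing R M x (ι R m * y) := by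
  rw [chevalleyPairing_apply, chevalleyPairing_apply, reverse.map_mul, reverse_ι, mul_assoc]

end CommRing

section Field

variable {K W : Type*} [Field K] [AddCommGroup W] [Module K W] [FiniteDimensional K W]

local notation "π" => GradedAlgebra.proj (fun i : ℕ => ⋀[K]^i W)

theorem exteriorPower_eq_bot_of_finrank_lt {k : ℕ} (hk : finrank K W < k) : ⋀[K]^k W = ⊥ :=
  Submodule.finrank_eq_zero.mp (by rw [exteriorPower.finrank_eq, Nat.choose_eq_zero_of_lt hk])

theorem exteriorPower_finrank_ne_bot : ⋀[K]^(finrank K W) W ≠ ⊥ := fun h => by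
  have h₁ := exteriorPower.finrank_eq (R := K) (M := W) (n := finrank K W)
  rw [h, finrank_bot, Nat.choose_self] at h₁
  exact zero_ne_one h₁

theorem proj_eq_zero_of_finrank_lt {k : ℕ} (hk : finrank K W < k) (x : ExteriorAlgebra K W) :
    π k x = 0 := by
  simpa [exteriorPower_eq_bot_of_finrank_lt hk] using proj_mem k x

theorem proj_finrank_contractLeft (d : Dual K W) (x : ExteriorAlgebra K W) :
    π (finrank K W) (contractLeft d x) = 0 := by
  rw [proj_contractLeft, proj_eq_zero_of_finrank_lt (Nat.lt_succ_self _), map_zero]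

theorem mul_eq_algebraMapInv_smul_of_mem_top {Θ : ExteriorAlgebra K W}
    (hΘ : Θ ∈ ⋀[K]^(finrank K W) W) (x : ExteriorAlgebra K W) :
    x * Θ = algebraMapInv x • Θ := by
  induction x using CliffordAlgebra.induction with
  | algebraMap r => rw [← Algebra.smul_def, algebraMap_leftInverse W r]
  | ι m =>
      have h : ι K m * Θ ∈ ⋀[K]^(1 + finrank K W) W :=
        SetLike.mul_mem_graded (ι_mem_exteriorPower_one m) hΘ
      rw [exteriorPower_eq_bot_of_finrank_lt (by omega), Submodule.mem_bot] at h
      rw [h, algebraMapInv_ι, zero_smul]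
  | mul x y hx hy => rw [mul_assoc, hy, mul_smul_comm, hx, smul_smul, map_mul, mul_comm]
  | add x y hx hy => rw [add_mul, hx, hy, map_add, add_smul]

theorem mul_eq_algebraMapInv_smul_of_mem_top_left {Θ : ExteriorAlgebra K W}
    (hΘ : Θ ∈ ⋀[K]^(finrank K W) W) (x : ExteriorAlgebra K W) :
    Θ * x = algebraMapInv x • Θ := by
  induction x using CliffordAlgebra.induction with
  | algebraMap r => rw [← Algebra.commutes, ← Algebra.smul_def, algebraMap_leftInverse W r]
  | ι m =>
      have h : Θ * ι K m ∈ ⋀[K]^(finrank K W + 1) W :=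
        SetLike.mul_mem_graded hΘ (ι_mem_exteriorPower_one m)
      rw [exteriorPower_eq_bot_of_finrank_lt (by omega), Submodule.mem_bot] at h
      rw [h, algebraMapInv_ι, zero_smul]
  | mul x y hx hy => rw [← mul_assoc, hx, smul_mul_assoc, hy, smul_smul, map_mul, mul_comm]
  | add x y hx hy => rw [mul_add, hx, hy, map_add, add_smul]

theorem chevalleyPairing_contractLeft (d : Dual K W) (x y : ExteriorAlgebra K W) :
    chevalleyPairing K W (contractLeft d x) y = chevalleyPairing K W x (contractLeft d y) := by
  have h := congrArg (π (finrank K W)) (contractLeft_mul d (involute (reverse x)) y)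
  rw [proj_finrank_contractLeft, involute_involute, map_add] at h
  rw [chevalleyPairing_apply, chevalleyPairing_apply, reverse_contractLeft, neg_mul, map_neg,
    eq_neg_of_add_eq_zero_left h.symm, neg_neg]

theorem chevalleyPairing_mul_of_mem_top {Θ : ExteriorAlgebra K W}
    (hΘ : Θ ∈ ⋀[K]^(finrank K W) W) (x y : ExteriorAlgebra K W) :
    chevalleyPairing K W x (Θ * y) = (algebraMapInv x * algebraMapInv y) • Θ := by
  rw [chevalleyPairing_apply, mul_eq_algebraMapInv_smul_of_mem_top_left hΘ, mul_smul_comm,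
    mul_eq_algebraMapInv_smul_of_mem_top hΘ, algebraMapInv_reverse, smul_smul, map_smul,
    proj_of_mem_same hΘ, mul_comm]

variable [CharZero K]

theorem exists_contractLeft_ne_zero {k : ℕ} (hk : k ≠ 0) {x : ExteriorAlgebra K W}
    (hx : x ∈ ⋀[K]^k W) (hx0 : x ≠ 0) : ∃ d : Dual K W, contractLeft d x ≠ 0 := by
  by_contra! h
  have h_euler := sum_ι_mul_contractLeft_coord (Module.finBasis K W) hx
  simp only [h, mul_zero, Finset.sum_const_zero] at h_euler
  rw [← Nat.cast_smul_eq_nsmul K] at h_euler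
  exact smul_ne_zero (Nat.cast_ne_zero.mpr hk) hx0 h_euler.symm

theorem exists_algebraMapInv_ne_zero {P : ExteriorAlgebra K W → Prop}
    (hP : ∀ d y, P y → P (contractLeft d y)) {x : ExteriorAlgebra K W} (hx : P x) (hx0 : x ≠ 0) :
    ∃ y, P y ∧ algebraMapInv y ≠ 0 := by
  suffices ∀ n x, P x → x ≠ 0 → (∀ i, n < i → π i x = 0) → ∃ y, P y ∧ algebraMapInv y ≠ 0 from
    this _ x hx hx0 fun i hi => proj_eq_zero_of_finrank_lt hi x
  intro n
  induction n with
  | zero =>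
      intro x hx hx0 htop
      exact ⟨x, hx, algebraMapInv_ne_zero_of_forall_proj_eq_zero hx0 htop⟩
  | succ n ih =>
      intro x hx hx0 htop
      by_cases hn : π (n + 1) x = 0
      · refine ih x hx hx0 fun i hi => ?_
        rcases (Nat.succ_le_of_lt hi).eq_or_lt with rfl | hi'
        · exact hn
        · exact htop i hi'
      obtain ⟨d, hd⟩ := exists_contractLeft_ne_zero n.succ_ne_zero (proj_mem _ x) hn
      refine ih _ (hP d x hx) (fun h => hd ?_) fun i hi => ?_
      · rw [← proj_contractLeft, h, map_zero]
      · rw [proj_contractLeft, htop _ (by omega), map_zero]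

theorem exists_chevalleyPairing_ne_zero {U : Submodule K (ExteriorAlgebra K W)}
    (hcontr : ∀ d, ∀ y ∈ U, contractLeft d y ∈ U) (hwedge : ∀ m, ∀ y ∈ U, ι K m * y ∈ U)
    {φ ψ : ExteriorAlgebra K W} (hφ : φ ≠ 0) (hψU : ψ ∈ U) (hψ : ψ ≠ 0) :
    ∃ y ∈ U, chevalleyPairing K W φ y ≠ 0 := by
  by_contra! hφU
  obtain ⟨a, ha, ha0⟩ := exists_algebraMapInv_ne_zero
    (P := fun a => ∀ y ∈ U, chevalleyPairing K W a y = 0)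
    (fun d a ha y hy => by rw [chevalleyPairing_contractLeft]; exact ha _ (hcontr d y hy)) hφU hφ
  obtain ⟨b, hb, hb0⟩ := exists_algebraMapInv_ne_zero hcontr hψU hψ
  obtain ⟨Θ, hΘ, hΘ0⟩ := Submodule.exists_mem_ne_zero_of_ne_bot
    (exteriorPower_finrank_ne_bot (K := K) (W := W))
  have h := ha _ (mul_mem_of_forall_ι_mul_mem hwedge Θ hb)
  rw [chevalleyPairing_mul_of_mem_top hΘ] at h
  exact smul_ne_zero (mul_ne_zero ha0 hb0) hΘ0 h

end Field
end ExteriorAlgebra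

section Spinor

open CliffordAlgebra ExteriorAlgebra

variable {V : Type*} [AddCommGroup V] [Module ℝ V]

theorem vPair_comm (p q : V × Dual ℝ V) : vPair p q = vPair q p := add_comm _ _

noncomputable def rhoBilin :
    (V × Dual ℝ V) →ₗ[ℝ] ExteriorAlgebra ℝ (Dual ℝ V) →ₗ[ℝ] ExteriorAlgebra ℝ (Dual ℝ V) :=
  LinearMap.mk₂ ℝ rho
    (fun u w x => by
      simp only [rho, Prod.fst_add, Prod.snd_add, map_add, add_mul, LinearMap.add_apply]
      abel)
    (fun c w x => by
      simp only [rho, Prod.smul_fst, Prod.smul_snd, map_smul, smul_mul_assoc, smul_add,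
        LinearMap.smul_apply])
    (fun w x y => by
      simp only [rho, mul_add, map_add]
      abel)
    (fun c w x => by simp only [rho, map_smul, smul_add, mul_smul_comm])

theorem rhoBilin_apply (w : V × Dual ℝ V) (x : ExteriorAlgebra ℝ (Dual ℝ V)) :
    rhoBilin w x = rho w x := rfl

theorem rho_mk_zero (v : V) (x : ExteriorAlgebra ℝ (Dual ℝ V)) :
    rho (v, 0) x = contractLeft (Dual.eval ℝ V v) x := by
  simp [rho]

theorem rho_zero_mk (α : Dual ℝ V) (x : ExteriorAlgebra ℝ (Dual ℝ V)) :
    rho (0, α) x = ι ℝ α * x := by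
  simp [rho]

theorem rho_anticomm (u w : V × Dual ℝ V) (x : ExteriorAlgebra ℝ (Dual ℝ V)) :
    rho u (rho w x) + rho w (rho u x) = vPair u w • x := by
  have hι : ι ℝ u.2 * (ι ℝ w.2 * x) = -(ι ℝ w.2 * (ι ℝ u.2 * x)) := by
    rw [← mul_assoc, ← mul_assoc, eq_neg_of_add_eq_zero_left (ι_add_mul_swap u.2 w.2), neg_mul]
  simp only [rho, mul_add, map_add, contractLeft_ι_mul, hι,
    contractLeft_comm (Dual.eval ℝ V u.1) (Dual.eval ℝ V w.1), Dual.eval_apply, vPair, add_smul]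
  abel

noncomputable def nullSubspace (φ : ExteriorAlgebra ℝ (Dual ℝ V)) :
    Submodule ℝ (V × Dual ℝ V) :=
  LinearMap.ker (rhoBilin.flip φ)

def rhoSpan (N : Set (V × Dual ℝ V)) (ψ : ExteriorAlgebra ℝ (Dual ℝ V)) :
    Submodule ℝ (ExteriorAlgebra ℝ (Dual ℝ V)) :=
  sInf {S | ψ ∈ S ∧ ∀ n ∈ N, ∀ y ∈ S, rho n y ∈ S}

theorem rhoSpan_le {N : Set (V × Dual ℝ V)} {ψ : ExteriorAlgebra ℝ (Dual ℝ V)}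
    {S : Submodule ℝ (ExteriorAlgebra ℝ (Dual ℝ V))} (hψ : ψ ∈ S)
    (hS : ∀ n ∈ N, ∀ y ∈ S, rho n y ∈ S) : rhoSpan N ψ ≤ S :=
  sInf_le ⟨hψ, hS⟩

theorem mem_rhoSpan_self (N : Set (V × Dual ℝ V)) (ψ : ExteriorAlgebra ℝ (Dual ℝ V)) :
    ψ ∈ rhoSpan N ψ :=
  Submodule.mem_sInf.mpr fun _ hS => hS.1

theorem rho_mem_rhoSpan {N : Set (V × Dual ℝ V)} {ψ y : ExteriorAlgebra ℝ (Dual ℝ V)}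
    {n : V × Dual ℝ V} (hn : n ∈ N) (hy : y ∈ rhoSpan N ψ) : rho n y ∈ rhoSpan N ψ :=
  Submodule.mem_sInf.mpr fun S hS => hS.2 n hn y (Submodule.mem_sInf.mp hy S hS)

theorem rho_mem_rhoSpan_of_mem_nullSet {N : Set (V × Dual ℝ V)}
    {ψ y : ExteriorAlgebra ℝ (Dual ℝ V)} {m : V × Dual ℝ V} (hm : m ∈ nullSet ψ)
    (hy : y ∈ rhoSpan N ψ) : rho m y ∈ rhoSpan N ψ := by
  set U := rhoSpan N ψ
  refine (rhoSpan_le (S := U ⊓ U.comap (rhoBilin m)) ⟨mem_rhoSpan_self N ψ, ?_⟩ ?_ hy).2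
  · rw [SetLike.mem_coe, Submodule.mem_comap, rhoBilin_apply, show rho m ψ = 0 from hm]
    exact U.zero_mem
  · rintro n hn y ⟨hyU, hmy⟩
    refine ⟨rho_mem_rhoSpan hn hyU, ?_⟩
    rw [SetLike.mem_coe, Submodule.mem_comap, rhoBilin_apply,
      eq_sub_of_add_eq (rho_anticomm m n y)]
    exact sub_mem (U.smul_mem _ hyU) (rho_mem_rhoSpan hn hmy)

theorem exists_vPair_ne_zero {w : V × Dual ℝ V} (hw : w ≠ 0) : ∃ w', vPair w w' ≠ 0 := by
  by_cases hα : w.2 = 0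
  · have hv : w.1 ≠ 0 := fun hv => hw (Prod.ext hv hα)
    obtain ⟨f, hf⟩ : ∃ f : Dual ℝ V, f w.1 ≠ 0 := by
      by_contra! h
      exact hv ((forall_dual_apply_eq_zero_iff ℝ w.1).mp h)
    exact ⟨(0, f), by simpa [vPair] using hf⟩
  · obtain ⟨v, hv⟩ := DFunLike.ne_iff.mp hα
    exact ⟨(v, 0), by simpa [vPair] using hv⟩

noncomputable def vPairForm : LinearMap.BilinForm ℝ (V × Dual ℝ V) :=
  LinearMap.mk₂ ℝ vPair
    (fun p p' q => by simp only [vPair, Prod.fst_add, Prod.snd_add, map_add,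
      LinearMap.add_apply]; ring)
    (fun c p q => by simp only [vPair, Prod.smul_fst, Prod.smul_snd, map_smul,
      LinearMap.smul_apply, smul_eq_mul]; ring)
    (fun p q q' => by simp only [vPair, Prod.fst_add, Prod.snd_add, map_add,
      LinearMap.add_apply]; ring)
    (fun c p q => by simp only [vPair, Prod.smul_fst, Prod.smul_snd, map_smul,
      LinearMap.smul_apply, smul_eq_mul]; ring)

theorem coe_orthogonal_nullSubspace (φ : ExteriorAlgebra ℝ (Dual ℝ V)) :
    (vPairForm.orthogonal (nullSubspace φ) : Set (V × Dual ℝ V)) = vPerp (nullSet φ) := by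
  ext w
  exact forall₂_congr fun e _ => by rw [← vPair_comm]; rfl

variable [FiniteDimensional ℝ V]

theorem chevalleyPairing_rho (w : V × Dual ℝ V) (x y : ExteriorAlgebra ℝ (Dual ℝ V)) :
    chevalleyPairing ℝ (Dual ℝ V) (rho w x) y = chevalleyPairing ℝ (Dual ℝ V) x (rho w y) := by
  simp only [rho, map_add, LinearMap.add_apply, chevalleyPairing_ι_mul,
    chevalleyPairing_contractLeft]

theorem chevalleyPairing_eq_zero_of_mem_nullSet {φ ψ : ExteriorAlgebra ℝ (Dual ℝ V)}
    {w : V × Dual ℝ V} (hw : w ≠ 0) (hφ : w ∈ nullSet φ) (hψ : w ∈ nullSet ψ) :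
    chevalleyPairing ℝ (Dual ℝ V) φ ψ = 0 := by
  obtain ⟨w', hw'⟩ := exists_vPair_ne_zero hw
  have hφ' : vPair w w' • φ = rho w (rho w' φ) := by
    rw [← rho_anticomm, show rho w φ = 0 from hφ, ← rhoBilin_apply w' 0, map_zero, add_zero]
  have h := congrArg (chevalleyPairing ℝ (Dual ℝ V) · ψ) hφ'
  simp only [map_smul, LinearMap.smul_apply, chevalleyPairing_rho, show rho w ψ = 0 from hψ,
    map_zero] at h
  exact (smul_eq_zero.mp h).resolve_left hw'

theorem nullSet_inter_eq_of_chevalleyPairing_ne_zero {φ ψ : ExteriorAlgebra ℝ (Dual ℝ V)}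
    (h : chevalleyPairing ℝ (Dual ℝ V) φ ψ ≠ 0) : nullSet φ ∩ nullSet ψ = {0} := by
  ext w
  refine ⟨fun ⟨hφ, hψ⟩ => ?_, ?_⟩
  · by_contra hw
    exact h (chevalleyPairing_eq_zero_of_mem_nullSet hw hφ hψ)
  · rintro rfl
    exact ⟨(nullSubspace φ).zero_mem, (nullSubspace ψ).zero_mem⟩

theorem rhoSpan_nullSet_le_ker {φ ψ : ExteriorAlgebra ℝ (Dual ℝ V)}
    (h : chevalleyPairing ℝ (Dual ℝ V) φ ψ = 0) :
    rhoSpan (nullSet φ) ψ ≤ LinearMap.ker (chevalleyPairing ℝ (Dual ℝ V) φ) :=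
  rhoSpan_le h fun n hn y _ => by
    rw [LinearMap.mem_ker, ← chevalleyPairing_rho, show rho n φ = 0 from hn, map_zero,
      LinearMap.zero_apply]

theorem chevalleyPairing_ne_zero_of_sup_eq_top {φ ψ : ExteriorAlgebra ℝ (Dual ℝ V)}
    (hφ : φ ≠ 0) (hψ : ψ ≠ 0) (hsup : nullSubspace φ ⊔ nullSubspace ψ = ⊤) :
    chevalleyPairing ℝ (Dual ℝ V) φ ψ ≠ 0 := by
  intro h
  set U := rhoSpan (nullSet φ) ψ
  have hU : ∀ w, ∀ y ∈ U, rho w y ∈ U := by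
    intro w y hy
    obtain ⟨n, hn, m, hm, rfl⟩ := Submodule.mem_sup.mp (hsup ▸ Submodule.mem_top (x := w))
    rw [← rhoBilin_apply, map_add, LinearMap.add_apply]
    exact add_mem (rho_mem_rhoSpan hn hy) (rho_mem_rhoSpan_of_mem_nullSet hm hy)
  obtain ⟨y, hyU, hy⟩ := exists_chevalleyPairing_ne_zero (U := U)
    (fun d y hy => by
      have h := hU ((evalEquiv ℝ V).symm d, 0) y hy
      rwa [rho_mk_zero, ← evalEquiv_apply, LinearEquiv.apply_symm_apply] at h)
    (fun α y hy => by simpa [rho_zero_mk] using hU (0, α) y hy) hφ (mem_rhoSpan_self _ ψ) hψ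
  exact hy (rhoSpan_nullSet_le_ker h hyU)

theorem finrank_le_finrank_nullSubspace {φ : ExteriorAlgebra ℝ (Dual ℝ V)}
    (hφ : vPerp (nullSet φ) ⊆ nullSet φ) : finrank ℝ V ≤ finrank ℝ (nullSubspace φ) := by
  have h_dim := LinearMap.BilinForm.finrank_add_finrank_orthogonal' (B := vPairForm)
    (nullSubspace φ)
  have h_le : finrank ℝ (vPairForm.orthogonal (nullSubspace φ)) ≤ finrank ℝ (nullSubspace φ) :=
    Submodule.finrank_mono (by
      rw [← SetLike.coe_subset_coe, coe_orthogonal_nullSubspace]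
      exact hφ)
  rw [finrank_prod, Subspace.dual_finrank_eq] at h_dim
  omega

theorem nullSubspace_sup_eq_top {φ ψ : ExteriorAlgebra ℝ (Dual ℝ V)}
    (hφ : vPerp (nullSet φ) ⊆ nullSet φ) (hψ : vPerp (nullSet ψ) ⊆ nullSet ψ)
    (h : nullSet φ ∩ nullSet ψ = {0}) : nullSubspace φ ⊔ nullSubspace ψ = ⊤ := by
  have h_inf : nullSubspace φ ⊓ nullSubspace ψ = ⊥ :=
    SetLike.coe_injective (by rw [Submodule.coe_inf, Submodule.bot_coe]; exact h)
  have h_dim := Submodule.finrank_sup_add_finrank_inf_eq (nullSubspace φ) (nullSubspace ψ)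
  have h_le := Submodule.finrank_le (nullSubspace φ ⊔ nullSubspace ψ)
  rw [h_inf, finrank_bot] at h_dim
  rw [finrank_prod, Subspace.dual_finrank_eq] at h_le
  apply Submodule.eq_top_of_finrank_eq
  rw [finrank_prod, Subspace.dual_finrank_eq]
  have := finrank_le_finrank_nullSubspace hφ
  have := finrank_le_finrank_nullSubspace hψ
  omega

end Spinor

/-- For pure spinors `φ, ψ ∈ ΛV*` (nonzero spinors with Lagrangian null
spaces), the Chevalley pairing `(φ,ψ) = (φ^⊤ ∧ ψ)_{[n]}` — the top-degree component of
`reverse φ * ψ`, where `reverse` multiplies degree `k` by `(−1)^{k(k−1)/2}` — is nonzero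
if and only if `N_φ` and `N_ψ` are transverse. -/
theorem stmt16 {V : Type*} [AddCommGroup V] [Module ℝ V] [FiniteDimensional ℝ V]
    (φ ψ : ExteriorAlgebra ℝ (Module.Dual ℝ V))
    (hφ0 : φ ≠ 0) (hφ : nullSet φ = vPerp (nullSet φ))
    (hψ0 : ψ ≠ 0) (hψ : nullSet ψ = vPerp (nullSet ψ)) :
    GradedAlgebra.proj (fun i : ℕ => ⋀[ℝ]^i (Module.Dual ℝ V))
        (Module.finrank ℝ V) (CliffordAlgebra.reverse φ * ψ) ≠ 0 ↔
      nullSet φ ∩ nullSet ψ = {0} := by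
  rw [← Subspace.dual_finrank_eq]
  exact ⟨nullSet_inter_eq_of_chevalleyPairing_ne_zero, fun h =>
    chevalleyPairing_ne_zero_of_sup_eq_top hφ0 hψ0
      (nullSubspace_sup_eq_top hφ.symm.subset hψ.symm.subset h)⟩
end

section
/- Let V, V′ be finite-dimensional real vector spaces and A: V → V′ linear. Say w = v⊕α ∈ V⊕V* and w′ = v′⊕α′ ∈ V′⊕(V′)* are A-related if v′ = A(v) and α = A*(α′). Then for the pullback A*: Λ(V′)* → ΛV* on contravariant spinors, ρ(w)(A*φ′) = A*(ρ(w′)φ′) holds for all A-related pairs (w,w′) and all φ′ ∈ Λ(V′)*, where ρ(v⊕α) = ι_v + α∧. Consequently, if φ′ is a pure spinor with A*φ′ ≠ 0, then A*φ′ is a pure spinor whose null space is {w ∈ V⊕V* : ∃ w′ ∈ N_{φ′}, w ∼_A w′}. -/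
set_option synthInstance.maxHeartbeats 1000000
set_option maxHeartbeats 1000000

open Module

/-- `w ∈ V⊕V*` and `w' ∈ V'⊕V'*` are `A`-related if `v' = A v` and `α = A*(α')`. -/
def ARel {V V' : Type*} [AddCommGroup V] [Module ℝ V] [AddCommGroup V'] [Module ℝ V']
    (A : V →ₗ[ℝ] V') (w : V × Module.Dual ℝ V) (w' : V' × Module.Dual ℝ V') : Prop :=
  w'.1 = A w.1 ∧ w.2 = A.dualMap w'.2

/-!
On generators of `Λ(V')*` the intertwining identity is clear: wedging commutes with `Λ(A*)`
because it is an algebra map, and `ι_v ∘ Λ(A*) = Λ(A*) ∘ ι_{Av}` because both sides are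
antiderivations agreeing on `V'*`.

For the second part let `L = {w : ∃ w' ∈ N_{φ'}, w ∼_A w'}` and `ψ = A*φ'`. Intertwining gives
`L ⊆ N_ψ`, and `N_ψ` is isotropic because `ρ(w)ρ(e) + ρ(e)ρ(w) = ⟨w, e⟩` and `ψ ≠ 0`. Hence
`L ⊆ N_ψ ⊆ N_ψ^⊥ ⊆ L^⊥`, and everything collapses once `L^⊥ ⊆ L`, i.e. once the backward image
of the coisotropic subspace `N_{φ'}` is coisotropic. For `(x, ξ) ∈ L^⊥` the prescription
`η(Av) = ξ(v)`, `η(u') = -β'(Ax)` for `(u', β') ∈ N_{φ'}` is consistent precisely because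
`(x, ξ) ⊥ L`; extending it to a covector `η` on `V'` gives `(Ax, η) ∈ N_{φ'}^⊥ = N_{φ'}` with
`A*η = ξ`.
-/

theorem LinearMap.exists_comp_eq_of_ker_le {K M N P : Type*} [DivisionRing K]
    [AddCommGroup M] [Module K M] [AddCommGroup N] [Module K N] [AddCommGroup P] [Module K P]
    (G : M →ₗ[K] N) (F : M →ₗ[K] P) (h : LinearMap.ker G ≤ LinearMap.ker F) :
    ∃ η : N →ₗ[K] P, η ∘ₗ G = F := by
  obtain ⟨η, hη⟩ := LinearMap.exists_extend
    ((LinearMap.ker G).liftQ F h ∘ₗ G.quotKerEquivRange.symm.toLinearMap)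
  refine ⟨η, LinearMap.ext fun m => ?_⟩
  simpa using LinearMap.congr_fun hη ⟨G m, LinearMap.mem_range_self G m⟩

theorem ExteriorAlgebra.contractLeft_map {R M N : Type*} [CommRing R]
    [AddCommGroup M] [Module R M] [AddCommGroup N] [Module R N]
    (f : M →ₗ[R] N) (d : Dual R N) (x : ExteriorAlgebra R M) :
    CliffordAlgebra.contractLeft d (ExteriorAlgebra.map f x) =
      ExteriorAlgebra.map f (CliffordAlgebra.contractLeft (d ∘ₗ f) x) := by
  induction x using CliffordAlgebra.left_induction with
  | algebraMap r => simp [CliffordAlgebra.contractLeft_algebraMap]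
  | add x y hx hy => simp only [map_add, hx, hy]
  | ι_mul x m hx =>
    rw [map_mul, ExteriorAlgebra.map_apply_ι, CliffordAlgebra.contractLeft_ι_mul,
      CliffordAlgebra.contractLeft_ι_mul, hx, map_sub, map_smul, map_mul,
      ExteriorAlgebra.map_apply_ι]
    simp

section Spinor

variable {V : Type*} [AddCommGroup V] [Module ℝ V]

theorem vPerp_anti {S T : Set (V × Dual ℝ V)} (h : S ⊆ T) : vPerp T ⊆ vPerp S :=
  fun _ hw e he => hw e (h he)

theorem rho_add_left (w e : V × Dual ℝ V) (φ : ExteriorAlgebra ℝ (Dual ℝ V)) :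
    rho (w + e) φ = rho w φ + rho e φ := by
  simp only [rho, Prod.fst_add, Prod.snd_add, map_add, add_mul, LinearMap.add_apply]
  abel

theorem rho_smul_left (c : ℝ) (w : V × Dual ℝ V) (φ : ExteriorAlgebra ℝ (Dual ℝ V)) :
    rho (c • w) φ = c • rho w φ := by
  simp only [rho, Prod.smul_fst, Prod.smul_snd, map_smul, smul_mul_assoc, LinearMap.smul_apply,
    smul_add]

theorem rho_zero_right (w : V × Dual ℝ V) : rho w (0 : ExteriorAlgebra ℝ (Dual ℝ V)) = 0 := by
  simp [rho]

def nullSetSubmodule (φ : ExteriorAlgebra ℝ (Dual ℝ V)) : Submodule ℝ (V × Dual ℝ V) where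
  carrier := nullSet φ
  add_mem' {w e} hw he := show rho (w + e) φ = 0 by
    rw [rho_add_left, show rho w φ = 0 from hw, show rho e φ = 0 from he, add_zero]
  zero_mem' := show rho 0 φ = 0 by simp [rho]
  smul_mem' c w hw := show rho (c • w) φ = 0 by
    rw [rho_smul_left, show rho w φ = 0 from hw, smul_zero]

theorem rho_rho_add_rho_rho (w e : V × Dual ℝ V) (φ : ExteriorAlgebra ℝ (Dual ℝ V)) :
    rho w (rho e φ) + rho e (rho w φ) = vPair w e • φ := by
  obtain ⟨v, α⟩ := w
  obtain ⟨u, β⟩ := e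
  have hαβ : ExteriorAlgebra.ι ℝ α * ExteriorAlgebra.ι ℝ β =
      -(ExteriorAlgebra.ι ℝ β * ExteriorAlgebra.ι ℝ α) :=
    eq_neg_of_add_eq_zero_left (ExteriorAlgebra.ι_add_mul_swap α β)
  simp only [rho, vPair, mul_add, map_add, CliffordAlgebra.contractLeft_ι_mul,
    Dual.eval_apply, ← mul_assoc, hαβ, neg_mul, add_smul,
    CliffordAlgebra.contractLeft_comm (Dual.eval ℝ V v) (Dual.eval ℝ V u) φ]
  abel

theorem nullSet_subset_vPerp {φ : ExteriorAlgebra ℝ (Dual ℝ V)} (hφ : φ ≠ 0) :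
    nullSet φ ⊆ vPerp (nullSet φ) := by
  intro w hw e he
  have h := rho_rho_add_rho_rho w e φ
  rw [show rho e φ = 0 from he, show rho w φ = 0 from hw, rho_zero_right, rho_zero_right,
    add_zero] at h
  exact (smul_eq_zero.mp h.symm).resolve_right hφ

end Spinor

section Pullback

variable {V V' : Type*} [AddCommGroup V] [Module ℝ V] [AddCommGroup V'] [Module ℝ V']

def relPreimage (A : V →ₗ[ℝ] V') (S : Set (V' × Dual ℝ V')) : Set (V × Dual ℝ V) :=
  {w | ∃ w' ∈ S, ARel A w w'}

theorem rho_map_dualMap_of_ARel (A : V →ₗ[ℝ] V') {w : V × Dual ℝ V} {w' : V' × Dual ℝ V'}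
    (h : ARel A w w') (φ' : ExteriorAlgebra ℝ (Dual ℝ V')) :
    rho w (ExteriorAlgebra.map A.dualMap φ') = ExteriorAlgebra.map A.dualMap (rho w' φ') := by
  obtain ⟨v, α⟩ := w
  obtain ⟨v', α'⟩ := w'
  obtain ⟨h1, h2⟩ := h
  dsimp only at h1 h2
  subst h1 h2
  have heval : Dual.eval ℝ V v ∘ₗ A.dualMap = Dual.eval ℝ V' (A v) := by
    ext β
    simp
  simp only [rho, map_add, map_mul, ExteriorAlgebra.map_apply_ι,
    ExteriorAlgebra.contractLeft_map, heval]

theorem relPreimage_nullSet_subset (A : V →ₗ[ℝ] V') (φ' : ExteriorAlgebra ℝ (Dual ℝ V')) :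
    relPreimage A (nullSet φ') ⊆ nullSet (ExteriorAlgebra.map A.dualMap φ') := by
  rintro w ⟨w', hw', h⟩
  show rho w _ = 0
  rw [rho_map_dualMap_of_ARel A h, show rho w' φ' = 0 from hw', map_zero]

theorem vPerp_relPreimage_subset (A : V →ₗ[ℝ] V') (S : Submodule ℝ (V' × Dual ℝ V'))
    (hS : vPerp (S : Set (V' × Dual ℝ V')) ⊆ S) :
    vPerp (relPreimage A S) ⊆ relPreimage A S := by
  rintro ⟨x, ξ⟩ hx
  let G : V × S →ₗ[ℝ] V' := A.coprod (LinearMap.fst ℝ V' (Dual ℝ V') ∘ₗ S.subtype)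
  let F : V × S →ₗ[ℝ] ℝ :=
    ξ.coprod (-(Dual.eval ℝ V' (A x) ∘ₗ LinearMap.snd ℝ V' (Dual ℝ V') ∘ₗ S.subtype))
  have hGF : LinearMap.ker G ≤ LinearMap.ker F := by
    rintro ⟨v, s⟩ hvs
    have hs : (s : V' × Dual ℝ V').1 = A (-v) := by
      rw [map_neg, eq_neg_iff_add_eq_zero, add_comm]
      exact hvs
    have hperp := hx (-v, A.dualMap (s : V' × Dual ℝ V').2) ⟨s, s.2, hs, rfl⟩
    simp only [vPair, LinearMap.dualMap_apply, map_neg] at hperp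
    simp only [LinearMap.mem_ker, F, LinearMap.coprod_apply, LinearMap.neg_apply,
      LinearMap.comp_apply, Dual.eval_apply, Submodule.subtype_apply, LinearMap.snd_apply]
    linarith
  obtain ⟨η, hη⟩ := LinearMap.exists_comp_eq_of_ker_le (M := V × S) G F hGF
  refine ⟨(A x, η), hS fun e he => ?_, rfl, ?_⟩
  · have h := LinearMap.congr_fun hη (0, ⟨e, he⟩)
    simp only [G, F, LinearMap.comp_apply, LinearMap.coprod_apply, map_zero, zero_add,
      LinearMap.neg_apply, Dual.eval_apply, Submodule.subtype_apply, LinearMap.fst_apply,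
      LinearMap.snd_apply] at h
    simp only [vPair, h]
    ring
  · ext v
    simpa [G, F] using (LinearMap.congr_fun hη (v, 0)).symm

end Pullback

theorem stmt18_general {V V' : Type*} [AddCommGroup V] [Module ℝ V]
    [AddCommGroup V'] [Module ℝ V']
    (A : V →ₗ[ℝ] V') :
    (∀ (w : V × Module.Dual ℝ V) (w' : V' × Module.Dual ℝ V'), ARel A w w' →
      ∀ φ' : ExteriorAlgebra ℝ (Module.Dual ℝ V'),
        rho w (ExteriorAlgebra.map (A.dualMap) φ') =
          ExteriorAlgebra.map (A.dualMap) (rho w' φ')) ∧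
    (∀ φ' : ExteriorAlgebra ℝ (Module.Dual ℝ V'),
      φ' ≠ 0 → nullSet φ' = vPerp (nullSet φ') →
      ExteriorAlgebra.map (A.dualMap) φ' ≠ 0 →
      nullSet (ExteriorAlgebra.map (A.dualMap) φ') =
          {w : V × Module.Dual ℝ V | ∃ w' ∈ nullSet φ', ARel A w w'} ∧
        nullSet (ExteriorAlgebra.map (A.dualMap) φ') =
          vPerp (nullSet (ExteriorAlgebra.map (A.dualMap) φ'))) := by
  refine ⟨fun w w' h φ' => rho_map_dualMap_of_ARel A h φ', fun φ' _ hpure hψ => ?_⟩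
  have hLN : relPreimage A (nullSet φ') ⊆ _ := relPreimage_nullSet_subset A φ'
  have hNiso := nullSet_subset_vPerp hψ
  have hperpL : vPerp (relPreimage A (nullSet φ')) ⊆ relPreimage A (nullSet φ') :=
    vPerp_relPreimage_subset A (nullSetSubmodule φ') hpure.symm.subset
  have hperpN := (vPerp_anti hLN).trans hperpL
  exact ⟨(hNiso.trans hperpN).antisymm hLN, hNiso.antisymm (hperpN.trans hLN)⟩

/-- For a linear map `A : V → V'`, the pullback
`A* = Λ(A*) : Λ(V')* → ΛV*` intertwines the spinor actions along `A`-related elements: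
`ρ(w)(A*φ') = A*(ρ(w')φ')` whenever `w ∼_A w'`.  Consequently, if `φ'` is a pure spinor
with `A*φ' ≠ 0`, then `A*φ'` is a pure spinor (its null space is Lagrangian) and its null
space is `{w : ∃ w' ∈ N_{φ'}, w ∼_A w'}`. -/
theorem stmt18 {V V' : Type*} [AddCommGroup V] [Module ℝ V] [FiniteDimensional ℝ V]
    [AddCommGroup V'] [Module ℝ V'] [FiniteDimensional ℝ V']
    (A : V →ₗ[ℝ] V') :
    (∀ (w : V × Module.Dual ℝ V) (w' : V' × Module.Dual ℝ V'), ARel A w w' →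
      ∀ φ' : ExteriorAlgebra ℝ (Module.Dual ℝ V'),
        rho w (ExteriorAlgebra.map (A.dualMap) φ') =
          ExteriorAlgebra.map (A.dualMap) (rho w' φ')) ∧
    (∀ φ' : ExteriorAlgebra ℝ (Module.Dual ℝ V'),
      φ' ≠ 0 → nullSet φ' = vPerp (nullSet φ') →
      ExteriorAlgebra.map (A.dualMap) φ' ≠ 0 →
      nullSet (ExteriorAlgebra.map (A.dualMap) φ') =
          {w : V × Module.Dual ℝ V | ∃ w' ∈ nullSet φ', ARel A w w'} ∧
        nullSet (ExteriorAlgebra.map (A.dualMap) φ') =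
          vPerp (nullSet (ExteriorAlgebra.map (A.dualMap) φ'))) :=
  stmt18_general A
end

section
/- Let V be a finite-dimensional real vector space with nondegenerate symmetric bilinear form B, and A ∈ O(V) with det(A + I) ≠ 0. Identifying V ≅ V* via B, the operator on 𝕍 = V ⊕ V* given in block form by A^κ = [[(A+I)/2, (A−I)], [(A−I)/4, (A+I)/2]] is orthogonal with respect to the canonical split pairing on V ⊕ V* (i.e. ⟨A^κ w₁, A^κ w₂⟩ = ⟨w₁,w₂⟩), and the map A ↦ A^κ is a group homomorphism O(V) → O(𝕍). -/
/-- The operator `A^κ = [[(A+I)/2, A−I],[(A−I)/4, (A+I)/2]]` on `𝕍 = V ⊕ V* ≅ V ⊕ V`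
(second summand identified with `V*` via `B`). -/
noncomputable def Akappa {V : Type*} [AddCommGroup V] [Module ℝ V]
    (A : V →ₗ[ℝ] V) : V × V →ₗ[ℝ] V × V :=
  LinearMap.prod
    ((((1 : ℝ) / 2) • (A + LinearMap.id)).comp (LinearMap.fst ℝ V V) +
      (A - LinearMap.id).comp (LinearMap.snd ℝ V V))
    ((((1 : ℝ) / 4) • (A - LinearMap.id)).comp (LinearMap.fst ℝ V V) +
      (((1 : ℝ) / 2) • (A + LinearMap.id)).comp (LinearMap.snd ℝ V V))

/-- The canonical split pairing on `𝕍 = V ⊕ V* ≅ V ⊕ V` (via `B`):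
`⟨v₁⊕u₁, v₂⊕u₂⟩ = B(u₁,v₂) + B(u₂,v₁)`. -/
def kappaPair {V : Type*} [AddCommGroup V] [Module ℝ V]
    (B : LinearMap.BilinForm ℝ V) (p q : V × V) : ℝ :=
  B p.2 q.1 + B q.2 p.1

/-! `A^κ` is the conjugate of `A ⊕ I` by the Cayley-type isomorphism `κ(v, w) = (v − w, (v + w)/2)`,
which carries the form `B ⊕ (−B)` on `V ⊕ V̄` to the split pairing. Orthogonality of `A^κ` is then
the orthogonality of `A ⊕ I` for `B ⊕ (−B)`, and multiplicativity is that of `A ↦ A ⊕ I`. -/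

section Kappa

variable {V : Type*} [AddCommGroup V] [Module ℝ V]

variable (V) in
noncomputable def kappa : (V × V) ≃ₗ[ℝ] V × V where
  toFun p := (p.1 - p.2, (1 / 2 : ℝ) • (p.1 + p.2))
  invFun q := (q.2 + (1 / 2 : ℝ) • q.1, q.2 - (1 / 2 : ℝ) • q.1)
  map_add' p q := by ext <;> simp only [Prod.fst_add, Prod.snd_add] <;> module
  map_smul' c p := by ext <;> simp only [Prod.smul_fst, Prod.smul_snd, RingHom.id_apply] <;> module
  left_inv p := by ext <;> dsimp only <;> module
  right_inv q := by ext <;> dsimp only <;> module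

theorem kappaPair_kappa {B : LinearMap.BilinForm ℝ V} (hB : B.IsSymm) (p q : V × V) :
    kappaPair B (kappa V p) (kappa V q) = B p.1 q.1 - B p.2 q.2 := by
  simp only [kappaPair, kappa, LinearEquiv.coe_mk, LinearMap.coe_mk, AddHom.coe_mk, map_add,
    map_sub, map_smul, LinearMap.add_apply, LinearMap.smul_apply, smul_eq_mul]
  rw [hB.eq q.1 p.1, hB.eq q.2 p.1, hB.eq q.1 p.2, hB.eq q.2 p.2]
  ring

theorem Akappa_eq_conj (A : V →ₗ[ℝ] V) :
    Akappa A = (kappa V).conj (A.prodMap LinearMap.id) := by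
  ext w <;>
  · simp only [Akappa, kappa, LinearEquiv.conj_apply_apply, LinearEquiv.coe_mk,
      LinearEquiv.coe_symm_mk', LinearMap.coe_mk, AddHom.coe_mk, LinearMap.prodMap_apply,
      LinearMap.prod_apply, Function.prod, LinearMap.add_apply, LinearMap.comp_apply,
      LinearMap.smul_apply, LinearMap.sub_apply, LinearMap.id_apply, LinearMap.fst_apply,
      LinearMap.snd_apply, LinearMap.inl_apply, LinearMap.inr_apply, map_add, map_sub, map_smul,
      map_zero]
    module

theorem kappaPair_Akappa {B : LinearMap.BilinForm ℝ V} (hB : B.IsSymm) {A : V →ₗ[ℝ] V}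
    (hA : ∀ v w : V, B (A v) (A w) = B v w) (w₁ w₂ : V × V) :
    kappaPair B (Akappa A w₁) (Akappa A w₂) = kappaPair B w₁ w₂ := by
  obtain ⟨p₁, rfl⟩ := (kappa V).surjective w₁
  obtain ⟨p₂, rfl⟩ := (kappa V).surjective w₂
  simp only [Akappa_eq_conj, LinearEquiv.conj_apply_apply, LinearEquiv.symm_apply_apply,
    kappaPair_kappa hB, LinearMap.prodMap_apply, LinearMap.id_apply, hA]

theorem Akappa_comp (A₁ A₂ : V →ₗ[ℝ] V) : Akappa (A₁ ∘ₗ A₂) = Akappa A₁ ∘ₗ Akappa A₂ := by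
  rw [Akappa_eq_conj, Akappa_eq_conj, Akappa_eq_conj, ← LinearEquiv.conj_comp,
    LinearMap.prodMap_comp, LinearMap.id_comp]

theorem Akappa_id : Akappa (LinearMap.id : V →ₗ[ℝ] V) = LinearMap.id := by
  rw [Akappa_eq_conj, LinearMap.prodMap_id, LinearEquiv.conj_id]

end Kappa

theorem stmt19_general {V : Type*} [AddCommGroup V] [Module ℝ V]
    (B : LinearMap.BilinForm ℝ V) (hsymm : B.IsSymm)
    (A : V →ₗ[ℝ] V) (hA : ∀ v w : V, B (A v) (A w) = B v w) :
    (∀ w₁ w₂ : V × V, kappaPair B (Akappa A w₁) (Akappa A w₂) = kappaPair B w₁ w₂) ∧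
    (∀ A₁ A₂ : V →ₗ[ℝ] V, (∀ v w, B (A₁ v) (A₁ w) = B v w) →
      (∀ v w, B (A₂ v) (A₂ w) = B v w) →
      Akappa (A₁ ∘ₗ A₂) = Akappa A₁ ∘ₗ Akappa A₂) ∧
    Akappa (LinearMap.id : V →ₗ[ℝ] V) = LinearMap.id :=
  ⟨kappaPair_Akappa hsymm hA, fun A₁ A₂ _ _ => Akappa_comp A₁ A₂, Akappa_id⟩

/-- For `A ∈ O(V)` with `det(A + I) ≠ 0`, the operator `A^κ` is orthogonal
for the canonical split pairing on `𝕍 = V ⊕ V*`, and `A ↦ A^κ` is a group homomorphism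
`O(V) → O(𝕍)` (it preserves composition and identity). -/
theorem stmt19 {V : Type*} [AddCommGroup V] [Module ℝ V] [FiniteDimensional ℝ V]
    (B : LinearMap.BilinForm ℝ V) (hsymm : B.IsSymm) (hnd : B.Nondegenerate)
    (A : V →ₗ[ℝ] V) (hA : ∀ v w : V, B (A v) (A w) = B v w)
    (hdet : LinearMap.det (A + LinearMap.id) ≠ 0) :
    (∀ w₁ w₂ : V × V, kappaPair B (Akappa A w₁) (Akappa A w₂) = kappaPair B w₁ w₂) ∧
    (∀ A₁ A₂ : V →ₗ[ℝ] V, (∀ v w, B (A₁ v) (A₁ w) = B v w) →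
      (∀ v w, B (A₂ v) (A₂ w) = B v w) →
      Akappa (A₁ ∘ₗ A₂) = Akappa A₁ ∘ₗ Akappa A₂) ∧
    Akappa (LinearMap.id : V →ₗ[ℝ] V) = LinearMap.id :=
  stmt19_general B hsymm A hA
end
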